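/- arXiv:2403.01717 — 7 statements merged into one kernel-verified Lean document; each statement's English description precedes it below -/
import Mathlib

section
/- Let K₀ and K_T be compact subsets of ℝ^d, let μ₀ and μ_T be probability measures on ℝ^d with supports K₀ and K_T respectively, admitting Lebesgue densities f₀ = dμ₀/dλ and f_T = dμ_T/dλ, and let p : K₀ × K_T → ℝ, (y, x) ↦ p(x, y), be continuous and strictly positive on K₀ × K_T. Then for every β ∈ (0, ∞) there exists a pair of non-negative Lebesgue-integrable functions (ρ₀ on K₀, ρ_T on K_T), unique up to λ-almost-everywhere equality, such that f₀(y) = ρ₀(y) ∫_{K_T} p(x, y) ρ_T(x) dx for λ-a.e. y ∈ K₀, and f_T(x) = ρ_T(x)^{(1+β)/β} ∫_{K₀} p(x, y) ρ₀(y) dy for λ-a.e. x ∈ K_T. -/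
/-!
Write `t = β / (1 + β) ∈ (0, 1)`, so that `(1 + β) / β = t⁻¹`. A potential `u ∈ C(K₀)` determines
`ρ₀ = e^{-u} f₀`, then `ρ_T = (f_T / ∫ p ρ₀)^t` (which solves the second equation), and the
system reduces to the fixed-point equation `u = F u := log ∫ p ρ_T`. If `|u - v| ≤ δ` on `K₀`,
the positivity of the kernel gives `∫ p ρ₀[u] ≤ e^δ ∫ p ρ₀[v]`, hence `ρ_T[u] ≤ e^{tδ} ρ_T[v]`
and `|F u - F v| ≤ t δ`: `F` is a contraction of the complete space `C(K₀)`, and Banach's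
fixed-point theorem gives existence. Conversely every solution yields a fixed point
`u = log ∫ p ρ_T`, which gives uniqueness.
-/

open MeasureTheory

/-- `(ρ₀, ρ_T)` is a pair of non-negative Lebesgue-integrable functions (on `K₀`, `K_T`
respectively) solving the soft-constrained Schrödinger system with kernel `p` and
parameter `β`:
`f₀(y) = ρ₀(y) ∫_{K_T} p(x, y) ρ_T(x) dx` for a.e. `y ∈ K₀` and
`f_T(x) = ρ_T(x)^{(1+β)/β} ∫_{K₀} p(x, y) ρ₀(y) dy` for a.e. `x ∈ K_T`. -/
def IsSSBSolution {d : ℕ} (K₀ KT : Set (Fin d → ℝ)) (f₀ fT : (Fin d → ℝ) → ℝ)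
    (p : (Fin d → ℝ) → (Fin d → ℝ) → ℝ) (β : ℝ) (ρ₀ ρT : (Fin d → ℝ) → ℝ) : Prop :=
  Measurable ρ₀ ∧ Measurable ρT ∧ (∀ y, 0 ≤ ρ₀ y) ∧ (∀ x, 0 ≤ ρT x) ∧
  IntegrableOn ρ₀ K₀ volume ∧ IntegrableOn ρT KT volume ∧
  (∀ᵐ y ∂(volume.restrict K₀),
    f₀ y = ρ₀ y * ∫ x in KT, p x y * ρT x ∂volume) ∧
  (∀ᵐ x ∂(volume.restrict KT),
    fT x = ρT x ^ ((1 + β) / β) * ∫ y in K₀, p x y * ρ₀ y ∂volume)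

open Set Function Real

noncomputable section

theorem rpow_le_one_add_self {z t : ℝ} (hz : 0 ≤ z) (ht0 : 0 ≤ t) (ht1 : t ≤ 1) :
    z ^ t ≤ 1 + z := by
  rcases le_total z 1 with h | h
  · linarith [rpow_le_one hz h ht0]
  · linarith [rpow_le_self_of_one_le h ht1]

theorem abs_log_sub_log_le_of_le_exp_mul {a b δ : ℝ} (ha : 0 < a) (hb : 0 < b)
    (hab : a ≤ exp δ * b) (hba : b ≤ exp δ * a) : |log a - log b| ≤ δ := by
  have h₁ := log_le_log ha hab
  have h₂ := log_le_log hb hba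
  rw [log_mul (exp_pos δ).ne' hb.ne', log_exp] at h₁
  rw [log_mul (exp_pos δ).ne' ha.ne', log_exp] at h₂
  exact abs_sub_le_iff.2 ⟨by linarith, by linarith⟩

theorem measurable_indicator_of_measurable_domRestrict {α β : Type*} [MeasurableSpace α]
    [MeasurableSpace β] [Zero β] {s : Set α} {f : α → β} (hs : MeasurableSet s)
    (hf : Measurable (s.domRestrict f)) : Measurable (s.indicator f) := by
  refine measurable_of_restrict_of_restrict_compl hs ?_ ?_
  · convert hf using 1
    ext x
    exact indicator_of_mem x.2 f
  · convert measurable_const (a := (0 : β)) using 1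
    ext x
    exact indicator_of_notMem x.2 f

section ExtendByZero

variable {E : Type*} [TopologicalSpace E] {s : Set E}

open Classical in
def extendByZero (u : C(s, ℝ)) (y : E) : ℝ := if h : y ∈ s then u ⟨y, h⟩ else 0

theorem extendByZero_of_mem (u : C(s, ℝ)) {y : E} (hy : y ∈ s) :
    extendByZero u y = u ⟨y, hy⟩ :=
  dif_pos hy

theorem continuousOn_extendByZero (u : C(s, ℝ)) : ContinuousOn (extendByZero u) s := by
  rw [continuousOn_iff_continuous_domRestrict]
  convert u.continuous using 1
  ext y
  exact extendByZero_of_mem u y.2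

theorem measurable_extendByZero [MeasurableSpace E] [OpensMeasurableSpace E]
    (u : C(s, ℝ)) (hs : MeasurableSet s) : Measurable (extendByZero u) := by
  classical
  exact Measurable.dite u.continuous.measurable (measurable_const (a := (0 : ℝ))) hs

end ExtendByZero

section LogRestrict

variable {E : Type*} [TopologicalSpace E] {s : Set E} {g : E → ℝ}

def logRestrict (hg : ContinuousOn g s) (hg0 : ∀ y ∈ s, g y ≠ 0) : C(s, ℝ) :=
  ⟨s.domRestrict fun y => log (g y), (hg.log hg0).domRestrict⟩

theorem extendByZero_logRestrict (hg : ContinuousOn g s) (hg0 : ∀ y ∈ s, g y ≠ 0) {y : E}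
    (hy : y ∈ s) : extendByZero (logRestrict hg hg0) y = log (g y) :=
  extendByZero_of_mem _ hy

end LogRestrict

section Density

variable {E : Type*} [MeasurableSpace E] {ν μ : Measure E} [IsProbabilityMeasure μ] {f : E → ℝ}
  {K : Set E}

theorem setLIntegral_ofReal_eq_one_of_withDensity (hK : MeasurableSet K)
    (hμ : μ = ν.withDensity fun y => ENNReal.ofReal (f y)) (hKc : μ Kᶜ = 0) :
    ∫⁻ y in K, ENNReal.ofReal (f y) ∂ν = 1 := by
  rw [← withDensity_apply _ hK, ← hμ, ← prob_compl_eq_zero_iff hK, hKc]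

theorem integrableOn_of_withDensity (hfm : Measurable f) (hf0 : ∀ y, 0 ≤ f y)
    (hK : MeasurableSet K) (hμ : μ = ν.withDensity fun y => ENNReal.ofReal (f y))
    (hKc : μ Kᶜ = 0) : IntegrableOn f K ν := by
  refine ⟨hfm.aestronglyMeasurable, (hasFiniteIntegral_iff_ofReal (ae_of_all _ hf0)).2 ?_⟩
  rw [setLIntegral_ofReal_eq_one_of_withDensity hK hμ hKc]
  exact ENNReal.one_lt_top

theorem not_ae_eq_zero_of_withDensity (hK : MeasurableSet K)
    (hμ : μ = ν.withDensity fun y => ENNReal.ofReal (f y)) (hKc : μ Kᶜ = 0) :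
    ¬ f =ᵐ[ν.restrict K] 0 := by
  intro h
  have h₁ := setLIntegral_ofReal_eq_one_of_withDensity hK hμ hKc
  rw [lintegral_congr_ae (h.mono fun y hy => by rw [hy])] at h₁
  simp at h₁

end Density

section KernelIntegral

variable {X E : Type*} [MeasurableSpace E] {μ : Measure E} {k : X → E → ℝ} {g h : E → ℝ}
  {s : Set X} {K : Set E}

variable (μ) in
def kernelIntegral (k : X → E → ℝ) (K : Set E) (g : E → ℝ) (y : X) : ℝ :=
  ∫ x in K, k y x * g x ∂μ

theorem kernelIntegral_congr (hgh : g =ᵐ[μ.restrict K] h) :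
    kernelIntegral μ k K g = kernelIntegral μ k K h :=
  funext fun _ => integral_congr_ae (Filter.EventuallyEq.rfl.mul hgh)

theorem kernelIntegral_of_ae_eq_zero (hg : g =ᵐ[μ.restrict K] 0) :
    kernelIntegral μ k K g = 0 := by
  rw [kernelIntegral_congr hg]
  ext y
  simp [kernelIntegral]

variable [TopologicalSpace E] [T2Space E] [OpensMeasurableSpace E]

theorem continuousOn_kernelIntegral [TopologicalSpace X] [FirstCountableTopology X]
    (hs : IsCompact s) (hK : IsCompact K)
    (hk : ContinuousOn (uncurry k) (s ×ˢ K)) (hg : IntegrableOn g K μ) :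
    ContinuousOn (kernelIntegral μ k K g) s := by
  obtain ⟨C, hC⟩ := (hs.prod hK).exists_bound_of_continuousOn hk
  refine continuousOn_of_dominated (bound := fun x => C * ‖g x‖) (fun y hy => ?_)
    (fun y hy => ?_) (hg.norm.const_mul C) ?_
  · exact ((hk.uncurry_left y hy).aestronglyMeasurable hK.measurableSet).mul hg.1
  · refine ae_restrict_of_forall_mem hK.measurableSet fun x hx => ?_
    rw [norm_mul]
    exact mul_le_mul_of_nonneg_right (hC (y, x) ⟨hy, hx⟩) (norm_nonneg _)
  · exact ae_restrict_of_forall_mem hK.measurableSet fun x hx =>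
      (hk.uncurry_right x hx).mul continuousOn_const

variable {y : X}

theorem kernelIntegral_pos (hK : IsCompact K) (hk : ContinuousOn (k y) K)
    (hkpos : ∀ x ∈ K, 0 < k y x) (hg : IntegrableOn g K μ) (hg0 : ∀ x ∈ K, 0 ≤ g x)
    (hne : ¬ g =ᵐ[μ.restrict K] 0) : 0 < kernelIntegral μ k K g y := by
  have hnn : 0 ≤ᵐ[μ.restrict K] fun x => k y x * g x :=
    ae_restrict_of_forall_mem hK.measurableSet fun x hx => mul_nonneg (hkpos x hx).le (hg0 x hx)
  refine (integral_nonneg_of_ae hnn).lt_of_ne fun h0 => hne ?_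
  filter_upwards [(integral_eq_zero_iff_of_nonneg_ae hnn (hg.continuousOn_mul hk hK)).1 h0.symm,
    ae_restrict_mem hK.measurableSet] with x hx hxK
  exact (mul_eq_zero.1 hx).resolve_left (hkpos x hxK).ne'

theorem kernelIntegral_le_mul {C : ℝ} (hK : IsCompact K) (hk : ContinuousOn (k y) K)
    (hk0 : ∀ x ∈ K, 0 ≤ k y x) (hg : IntegrableOn g K μ) (hh : IntegrableOn h K μ)
    (hgh : ∀ x ∈ K, g x ≤ C * h x) :
    kernelIntegral μ k K g y ≤ C * kernelIntegral μ k K h y := by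
  rw [kernelIntegral, kernelIntegral, ← integral_const_mul]
  refine setIntegral_mono_on (hg.continuousOn_mul hk hK) ((hh.continuousOn_mul hk hK).const_mul C)
    hK.measurableSet fun x hx => ?_
  calc k y x * g x ≤ k y x * (C * h x) := mul_le_mul_of_nonneg_left (hgh x hx) (hk0 x hx)
    _ = C * (k y x * h x) := by ring

end KernelIntegral

structure SoftSchrodingerData (E : Type*) [TopologicalSpace E] [MeasurableSpace E]
    (μ : Measure E) where
  K₀ : Set E
  KT : Set E
  f₀ : E → ℝ
  fT : E → ℝ
  p : E → E → ℝ
  β : ℝ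
  isCompact_K₀ : IsCompact K₀
  isCompact_KT : IsCompact KT
  measurable_f₀ : Measurable f₀
  measurable_fT : Measurable fT
  f₀_nonneg : ∀ y, 0 ≤ f₀ y
  fT_nonneg : ∀ x, 0 ≤ fT x
  integrableOn_f₀ : IntegrableOn f₀ K₀ μ
  integrableOn_fT : IntegrableOn fT KT μ
  f₀_ne_zero : ¬ f₀ =ᵐ[μ.restrict K₀] 0
  fT_ne_zero : ¬ fT =ᵐ[μ.restrict KT] 0
  continuousOn_p : ContinuousOn (fun q : E × E => p q.2 q.1) (K₀ ×ˢ KT)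
  p_pos : ∀ y ∈ K₀, ∀ x ∈ KT, 0 < p x y
  β_pos : 0 < β

namespace SoftSchrodingerData

variable {E : Type*} [TopologicalSpace E] [MeasurableSpace E] {μ : Measure E}
  (S : SoftSchrodingerData E μ)

-- The two integrals of the system:
-- `P₀ ρ₀ x = ∫_{K₀} p x y * ρ₀ y` and `PT ρT y = ∫_{K_T} p x y * ρT x`.
def P₀ : (E → ℝ) → E → ℝ := kernelIntegral μ S.p S.K₀

def PT : (E → ℝ) → E → ℝ := kernelIntegral μ (flip S.p) S.KT

/-- `IsSSBSolution` with the Lebesgue measure replaced by `μ`. -/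
def IsSolution (ρ₀ ρT : E → ℝ) : Prop :=
  Measurable ρ₀ ∧ Measurable ρT ∧ (∀ y, 0 ≤ ρ₀ y) ∧ (∀ x, 0 ≤ ρT x) ∧
  IntegrableOn ρ₀ S.K₀ μ ∧ IntegrableOn ρT S.KT μ ∧
  (∀ᵐ y ∂(μ.restrict S.K₀), S.f₀ y = ρ₀ y * S.PT ρT y) ∧
  (∀ᵐ x ∂(μ.restrict S.KT), S.fT x = ρT x ^ ((1 + S.β) / S.β) * S.P₀ ρ₀ x)

def t : ℝ := S.β / (1 + S.β)

theorem t_pos : 0 < S.t := div_pos S.β_pos (by linarith [S.β_pos])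

theorem t_lt_one : S.t < 1 := (div_lt_one (by linarith [S.β_pos])).2 (by linarith)

theorem t_mul_exponent : S.t * ((1 + S.β) / S.β) = 1 := by
  have := S.β_pos
  rw [t]
  field_simp

instance : CompactSpace S.K₀ := isCompact_iff_compactSpace.mp S.isCompact_K₀

theorem continuousOn_uncurry_p : ContinuousOn (uncurry S.p) (S.KT ×ˢ S.K₀) :=
  S.continuousOn_p.comp continuous_swap.continuousOn fun _ hq => ⟨hq.2, hq.1⟩

-- Off `K₀` this is `f₀`, which is harmless: the system only sees `ρ₀` on `K₀`.
def rho₀ (u : C(S.K₀, ℝ)) (y : E) : ℝ := exp (-extendByZero u y) * S.f₀ y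

-- Cut off to `K_T`, the only place where `P₀ (rho₀ u)` is known to be continuous (so measurable).
def rhoT (u : C(S.K₀, ℝ)) : E → ℝ :=
  S.KT.indicator fun x => (S.fT x / S.P₀ (S.rho₀ u) x) ^ S.t

theorem rho₀_nonneg (u : C(S.K₀, ℝ)) (y : E) : 0 ≤ S.rho₀ u y :=
  mul_nonneg (exp_pos _).le (S.f₀_nonneg y)

theorem rho₀_ne_zero (u : C(S.K₀, ℝ)) : ¬ S.rho₀ u =ᵐ[μ.restrict S.K₀] 0 := fun h =>
  S.f₀_ne_zero (h.mono fun _ hy => (mul_eq_zero.1 hy).resolve_left (exp_pos _).ne')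

theorem rho₀_le_exp_dist_mul (u v : C(S.K₀, ℝ)) {y : E} (hy : y ∈ S.K₀) :
    S.rho₀ u y ≤ exp (dist u v) * S.rho₀ v y := by
  have h := ContinuousMap.dist_apply_le_dist (f := u) (g := v) ⟨y, hy⟩
  rw [Real.dist_eq] at h
  rw [rho₀, rho₀, ← mul_assoc, ← exp_add, extendByZero_of_mem u hy, extendByZero_of_mem v hy]
  exact mul_le_mul_of_nonneg_right (exp_le_exp.2 (by linarith [neg_abs_le (u ⟨y, hy⟩ - v ⟨y, hy⟩)]))
    (S.f₀_nonneg y)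

section Topology

variable [T2Space E] [OpensMeasurableSpace E]

theorem P₀_pos {g : E → ℝ} (hg : IntegrableOn g S.K₀ μ) (hg0 : ∀ y ∈ S.K₀, 0 ≤ g y)
    (hne : ¬ g =ᵐ[μ.restrict S.K₀] 0) {x : E} (hx : x ∈ S.KT) : 0 < S.P₀ g x :=
  kernelIntegral_pos S.isCompact_K₀ (S.continuousOn_uncurry_p.uncurry_left x hx)
    (fun y hy => S.p_pos y hy x hx) hg hg0 hne

theorem PT_pos {g : E → ℝ} (hg : IntegrableOn g S.KT μ) (hg0 : ∀ x ∈ S.KT, 0 ≤ g x)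
    (hne : ¬ g =ᵐ[μ.restrict S.KT] 0) {y : E} (hy : y ∈ S.K₀) : 0 < S.PT g y :=
  kernelIntegral_pos S.isCompact_KT (S.continuousOn_p.uncurry_left y hy)
    (fun x hx => S.p_pos y hy x hx) hg hg0 hne

theorem P₀_le_mul {g h : E → ℝ} {C : ℝ} (hg : IntegrableOn g S.K₀ μ)
    (hh : IntegrableOn h S.K₀ μ) (hgh : ∀ y ∈ S.K₀, g y ≤ C * h y) {x : E} (hx : x ∈ S.KT) :
    S.P₀ g x ≤ C * S.P₀ h x :=
  kernelIntegral_le_mul S.isCompact_K₀ (S.continuousOn_uncurry_p.uncurry_left x hx)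
    (fun y hy => (S.p_pos y hy x hx).le) hg hh hgh

theorem PT_le_mul {g h : E → ℝ} {C : ℝ} (hg : IntegrableOn g S.KT μ)
    (hh : IntegrableOn h S.KT μ) (hgh : ∀ x ∈ S.KT, g x ≤ C * h x) {y : E} (hy : y ∈ S.K₀) :
    S.PT g y ≤ C * S.PT h y :=
  kernelIntegral_le_mul S.isCompact_KT (S.continuousOn_p.uncurry_left y hy)
    (fun x hx => (S.p_pos y hy x hx).le) hg hh hgh

theorem measurable_rho₀ (u : C(S.K₀, ℝ)) : Measurable (S.rho₀ u) :=
  (measurable_extendByZero u S.isCompact_K₀.measurableSet).neg.exp.mul S.measurable_f₀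

theorem integrableOn_rho₀ (u : C(S.K₀, ℝ)) : IntegrableOn (S.rho₀ u) S.K₀ μ :=
  S.integrableOn_f₀.continuousOn_mul (continuousOn_extendByZero u).neg.rexp S.isCompact_K₀

theorem P₀_rho₀_pos (u : C(S.K₀, ℝ)) {x : E} (hx : x ∈ S.KT) : 0 < S.P₀ (S.rho₀ u) x :=
  S.P₀_pos (S.integrableOn_rho₀ u) (fun y _ => S.rho₀_nonneg u y) (S.rho₀_ne_zero u) hx

theorem rhoT_nonneg (u : C(S.K₀, ℝ)) (x : E) : 0 ≤ S.rhoT u x :=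
  indicator_nonneg (fun x hx => rpow_nonneg (div_nonneg (S.fT_nonneg x)
    (S.P₀_rho₀_pos u hx).le) _) x

theorem rhoT_ne_zero (u : C(S.K₀, ℝ)) : ¬ S.rhoT u =ᵐ[μ.restrict S.KT] 0 := by
  intro h
  refine S.fT_ne_zero ?_
  filter_upwards [h, ae_restrict_mem S.isCompact_KT.measurableSet] with x hx hxK
  have hA := S.P₀_rho₀_pos u hxK
  rw [Pi.zero_apply, rhoT, indicator_of_mem hxK,
    rpow_eq_zero (div_nonneg (S.fT_nonneg x) hA.le) S.t_pos.ne', div_eq_zero_iff] at hx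
  exact hx.resolve_right hA.ne'

theorem P₀_rho₀_le_exp_dist_mul (u v : C(S.K₀, ℝ)) {x : E} (hx : x ∈ S.KT) :
    S.P₀ (S.rho₀ u) x ≤ exp (dist u v) * S.P₀ (S.rho₀ v) x :=
  S.P₀_le_mul (S.integrableOn_rho₀ u) (S.integrableOn_rho₀ v)
    (fun _ hy => S.rho₀_le_exp_dist_mul u v hy) hx

theorem rhoT_le_exp_dist_mul (u v : C(S.K₀, ℝ)) {x : E} (hx : x ∈ S.KT) :
    S.rhoT u x ≤ exp (S.t * dist u v) * S.rhoT v x := by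
  have hu := S.P₀_rho₀_pos u hx
  have hv := S.P₀_rho₀_pos v hx
  have hvu := S.P₀_rho₀_le_exp_dist_mul v u hx
  rw [dist_comm] at hvu
  have hf := S.fT_nonneg x
  simp only [rhoT, indicator_of_mem hx]
  rw [mul_comm S.t, exp_mul, ← mul_rpow (exp_pos _).le (div_nonneg hf hv.le)]
  refine rpow_le_rpow (div_nonneg hf hu.le) ?_ S.t_pos.le
  rw [← mul_div_assoc, div_le_div_iff₀ hu hv]
  linarith [mul_le_mul_of_nonneg_left hvu hf]

section FirstCountable

variable [FirstCountableTopology E]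

theorem continuousOn_P₀ {g : E → ℝ} (hg : IntegrableOn g S.K₀ μ) :
    ContinuousOn (S.P₀ g) S.KT :=
  continuousOn_kernelIntegral S.isCompact_KT S.isCompact_K₀ S.continuousOn_uncurry_p hg

theorem continuousOn_PT {g : E → ℝ} (hg : IntegrableOn g S.KT μ) :
    ContinuousOn (S.PT g) S.K₀ :=
  continuousOn_kernelIntegral S.isCompact_K₀ S.isCompact_KT S.continuousOn_p hg

theorem measurable_rhoT (u : C(S.K₀, ℝ)) : Measurable (S.rhoT u) :=
  measurable_indicator_of_measurable_domRestrict S.isCompact_KT.measurableSet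
    (((S.measurable_fT.comp measurable_subtype_coe).div
      (S.continuousOn_P₀ (S.integrableOn_rho₀ u)).domRestrict.measurable).pow_const _)

variable [IsFiniteMeasureOnCompacts μ]

theorem integrableOn_rhoT (u : C(S.K₀, ℝ)) : IntegrableOn (S.rhoT u) S.KT μ := by
  have hq : IntegrableOn (fun x => (S.P₀ (S.rho₀ u) x)⁻¹ * S.fT x) S.KT μ :=
    S.integrableOn_fT.continuousOn_mul
      ((S.continuousOn_P₀ (S.integrableOn_rho₀ u)).inv₀ fun x hx => (S.P₀_rho₀_pos u hx).ne')
      S.isCompact_KT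
  have hone : IntegrableOn (fun _ => (1 : ℝ)) S.KT μ :=
    integrableOn_const S.isCompact_KT.measure_lt_top.ne
  refine Integrable.mono' (hone.add hq)
    (S.measurable_rhoT u).aestronglyMeasurable
    (ae_restrict_of_forall_mem S.isCompact_KT.measurableSet fun x hx => ?_)
  rw [norm_of_nonneg (S.rhoT_nonneg u x), rhoT, indicator_of_mem hx, div_eq_inv_mul]
  exact rpow_le_one_add_self (mul_nonneg (inv_nonneg.2 (S.P₀_rho₀_pos u hx).le)
    (S.fT_nonneg x)) S.t_pos.le S.t_lt_one.le

theorem PT_rhoT_pos (u : C(S.K₀, ℝ)) {y : E} (hy : y ∈ S.K₀) : 0 < S.PT (S.rhoT u) y :=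
  S.PT_pos (S.integrableOn_rhoT u) (fun x _ => S.rhoT_nonneg u x) (S.rhoT_ne_zero u) hy

theorem PT_rhoT_le_exp_dist_mul (u v : C(S.K₀, ℝ)) {y : E} (hy : y ∈ S.K₀) :
    S.PT (S.rhoT u) y ≤ exp (S.t * dist u v) * S.PT (S.rhoT v) y :=
  S.PT_le_mul (S.integrableOn_rhoT u) (S.integrableOn_rhoT v)
    (fun _ hx => S.rhoT_le_exp_dist_mul u v hx) hy

def F (u : C(S.K₀, ℝ)) : C(S.K₀, ℝ) :=
  logRestrict (S.continuousOn_PT (S.integrableOn_rhoT u)) fun _ hy => (S.PT_rhoT_pos u hy).ne'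

theorem dist_F_le (u v : C(S.K₀, ℝ)) : dist (S.F u) (S.F v) ≤ S.t * dist u v := by
  refine (ContinuousMap.dist_le (mul_nonneg S.t_pos.le dist_nonneg)).2 fun y => ?_
  rw [Real.dist_eq]
  refine abs_log_sub_log_le_of_le_exp_mul (S.PT_rhoT_pos u y.2) (S.PT_rhoT_pos v y.2)
    (S.PT_rhoT_le_exp_dist_mul u v y.2) ?_
  rw [dist_comm]
  exact S.PT_rhoT_le_exp_dist_mul v u y.2

theorem contractingWith_F : ContractingWith ⟨S.t, S.t_pos.le⟩ S.F :=
  ⟨S.t_lt_one, LipschitzWith.of_dist_le_mul S.dist_F_le⟩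

theorem PT_rhoT_eq_exp_of_isFixedPt {u : C(S.K₀, ℝ)} (hu : IsFixedPt S.F u) {y : E}
    (hy : y ∈ S.K₀) : S.PT (S.rhoT u) y = exp (extendByZero u y) := by
  conv_rhs => rw [← hu.eq, F, extendByZero_logRestrict _ _ hy]
  exact (exp_log (S.PT_rhoT_pos u hy)).symm

theorem isSolution_of_isFixedPt {u : C(S.K₀, ℝ)} (hu : IsFixedPt S.F u) :
    S.IsSolution (S.rho₀ u) (S.rhoT u) := by
  refine ⟨S.measurable_rho₀ u, S.measurable_rhoT u, S.rho₀_nonneg u, S.rhoT_nonneg u,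
    S.integrableOn_rho₀ u, S.integrableOn_rhoT u,
    ae_restrict_of_forall_mem S.isCompact_K₀.measurableSet fun y hy => ?_,
    ae_restrict_of_forall_mem S.isCompact_KT.measurableSet fun x hx => ?_⟩
  · rw [S.PT_rhoT_eq_exp_of_isFixedPt hu hy, rho₀, mul_right_comm, ← exp_add, neg_add_cancel,
      exp_zero, one_mul]
  · have hA := S.P₀_rho₀_pos u hx
    rw [rhoT, indicator_of_mem hx, ← rpow_mul (div_nonneg (S.fT_nonneg x) hA.le),
      S.t_mul_exponent, rpow_one, div_mul_cancel₀ _ hA.ne']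

theorem exists_isFixedPt_of_isSolution {ρ₀ ρT : E → ℝ} (h : S.IsSolution ρ₀ ρT) :
    ∃ v, IsFixedPt S.F v ∧ ρ₀ =ᵐ[μ.restrict S.K₀] S.rho₀ v ∧ ρT =ᵐ[μ.restrict S.KT] S.rhoT v := by
  obtain ⟨-, -, hρ₀0, hρT0, hρ₀, hρT, hf₀, hfT⟩ := h
  have hρT_ne : ¬ ρT =ᵐ[μ.restrict S.KT] 0 := fun h0 => S.f₀_ne_zero <| hf₀.mono fun y hy => by
    rw [hy, PT, kernelIntegral_of_ae_eq_zero h0, Pi.zero_apply, mul_zero]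
  have hρ₀_ne : ¬ ρ₀ =ᵐ[μ.restrict S.K₀] 0 := fun h0 => S.fT_ne_zero <| hfT.mono fun x hx => by
    rw [hx, P₀, kernelIntegral_of_ae_eq_zero h0, Pi.zero_apply, mul_zero]
  have hc : ∀ y ∈ S.K₀, 0 < S.PT ρT y := fun y hy => S.PT_pos hρT (fun x _ => hρT0 x) hρT_ne hy
  have hA : ∀ x ∈ S.KT, 0 < S.P₀ ρ₀ x := fun x hx => S.P₀_pos hρ₀ (fun y _ => hρ₀0 y) hρ₀_ne hx
  set v := logRestrict (S.continuousOn_PT hρT) fun y hy => (hc y hy).ne'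
  have h₀ : ρ₀ =ᵐ[μ.restrict S.K₀] S.rho₀ v := by
    filter_upwards [hf₀, ae_restrict_mem S.isCompact_K₀.measurableSet] with y hy hyK
    rw [rho₀, extendByZero_logRestrict _ _ hyK, exp_neg, exp_log (hc y hyK), hy, mul_comm (ρ₀ y),
      inv_mul_cancel_left₀ (hc y hyK).ne']
  have hP₀ : S.P₀ (S.rho₀ v) = S.P₀ ρ₀ := (kernelIntegral_congr h₀).symm
  have hT : ρT =ᵐ[μ.restrict S.KT] S.rhoT v := by
    filter_upwards [hfT, ae_restrict_mem S.isCompact_KT.measurableSet] with x hx hxK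
    rw [rhoT, indicator_of_mem hxK, hP₀, hx, mul_div_cancel_right₀ _ (hA x hxK).ne',
      ← rpow_mul (hρT0 x), mul_comm, S.t_mul_exponent, rpow_one]
  have hPT : S.PT (S.rhoT v) = S.PT ρT := (kernelIntegral_congr hT).symm
  refine ⟨v, ContinuousMap.ext fun y => ?_, h₀, hT⟩
  show log (S.PT (S.rhoT v) y) = log (S.PT ρT y)
  rw [hPT]

theorem exists_isSolution_unique : ∃ ρ₀ ρT, S.IsSolution ρ₀ ρT ∧
    ∀ ρ₀' ρT', S.IsSolution ρ₀' ρT' →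
      ρ₀' =ᵐ[μ.restrict S.K₀] ρ₀ ∧ ρT' =ᵐ[μ.restrict S.KT] ρT := by
  have hF := S.contractingWith_F
  refine ⟨_, _, S.isSolution_of_isFixedPt hF.fixedPoint_isFixedPt, fun ρ₀ ρT h => ?_⟩
  obtain ⟨v, hv, h₀, hT⟩ := S.exists_isFixedPt_of_isSolution h
  rw [← hF.fixedPoint_unique hv]
  exact ⟨h₀, hT⟩

end FirstCountable

end Topology

end SoftSchrodingerData

end

theorem stmt0_general {d : ℕ} (K₀ KT : Set (Fin d → ℝ)) (hK₀c : IsCompact K₀) (hKTc : IsCompact KT)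
    (μ₀ μT : Measure (Fin d → ℝ)) [IsProbabilityMeasure μ₀] [IsProbabilityMeasure μT]
    (f₀ fT : (Fin d → ℝ) → ℝ) (hf₀m : Measurable f₀) (hfTm : Measurable fT)
    (hf₀0 : ∀ y, 0 ≤ f₀ y) (hfT0 : ∀ x, 0 ≤ fT x)
    (hμ₀ : μ₀ = volume.withDensity fun y => ENNReal.ofReal (f₀ y))
    (hμT : μT = volume.withDensity fun x => ENNReal.ofReal (fT x))
    (hsupp₀ : μ₀ K₀ᶜ = 0)
    (hsuppT : μT KTᶜ = 0)
    (p : (Fin d → ℝ) → (Fin d → ℝ) → ℝ)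
    (hpc : ContinuousOn (fun q : (Fin d → ℝ) × (Fin d → ℝ) => p q.2 q.1) (K₀ ×ˢ KT))
    (hpp : ∀ y ∈ K₀, ∀ x ∈ KT, 0 < p x y)
    (β : ℝ) (hβ : 0 < β) :
    ∃ ρ₀ ρT : (Fin d → ℝ) → ℝ, IsSSBSolution K₀ KT f₀ fT p β ρ₀ ρT ∧
      ∀ ρ₀' ρT' : (Fin d → ℝ) → ℝ, IsSSBSolution K₀ KT f₀ fT p β ρ₀' ρT' →
        ρ₀' =ᵐ[volume.restrict K₀] ρ₀ ∧ ρT' =ᵐ[volume.restrict KT] ρT := by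
  have hK₀ := hK₀c.measurableSet
  have hKT := hKTc.measurableSet
  exact SoftSchrodingerData.exists_isSolution_unique
    { K₀, KT, f₀, fT, p, β
      isCompact_K₀ := hK₀c
      isCompact_KT := hKTc
      measurable_f₀ := hf₀m
      measurable_fT := hfTm
      f₀_nonneg := hf₀0
      fT_nonneg := hfT0
      integrableOn_f₀ := integrableOn_of_withDensity hf₀m hf₀0 hK₀ hμ₀ hsupp₀
      integrableOn_fT := integrableOn_of_withDensity hfTm hfT0 hKT hμT hsuppT
      f₀_ne_zero := not_ae_eq_zero_of_withDensity hK₀ hμ₀ hsupp₀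
      fT_ne_zero := not_ae_eq_zero_of_withDensity hKT hμT hsuppT
      continuousOn_p := hpc
      p_pos := hpp
      β_pos := hβ }

/-- Existence and uniqueness (up to λ-a.e. equality) of the solution of the soft-constrained
Schrödinger system on compact supports, for every `β ∈ (0, ∞)`. -/
theorem stmt0 {d : ℕ} (K₀ KT : Set (Fin d → ℝ)) (hK₀c : IsCompact K₀) (hKTc : IsCompact KT)
    (μ₀ μT : Measure (Fin d → ℝ)) [IsProbabilityMeasure μ₀] [IsProbabilityMeasure μT]
    (f₀ fT : (Fin d → ℝ) → ℝ) (hf₀m : Measurable f₀) (hfTm : Measurable fT)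
    (hf₀0 : ∀ y, 0 ≤ f₀ y) (hfT0 : ∀ x, 0 ≤ fT x)
    (hμ₀ : μ₀ = volume.withDensity fun y => ENNReal.ofReal (f₀ y))
    (hμT : μT = volume.withDensity fun x => ENNReal.ofReal (fT x))
    (hsupp₀ : μ₀ K₀ᶜ = 0)
    (hsupp₀' : ∀ U : Set (Fin d → ℝ), IsOpen U → (U ∩ K₀).Nonempty → 0 < μ₀ U)
    (hsuppT : μT KTᶜ = 0)
    (hsuppT' : ∀ U : Set (Fin d → ℝ), IsOpen U → (U ∩ KT).Nonempty → 0 < μT U)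
    (p : (Fin d → ℝ) → (Fin d → ℝ) → ℝ)
    (hpc : ContinuousOn (fun q : (Fin d → ℝ) × (Fin d → ℝ) => p q.2 q.1) (K₀ ×ˢ KT))
    (hpp : ∀ y ∈ K₀, ∀ x ∈ KT, 0 < p x y)
    (β : ℝ) (hβ : 0 < β) :
    ∃ ρ₀ ρT : (Fin d → ℝ) → ℝ, IsSSBSolution K₀ KT f₀ fT p β ρ₀ ρT ∧
      ∀ ρ₀' ρT' : (Fin d → ℝ) → ℝ, IsSSBSolution K₀ KT f₀ fT p β ρ₀' ρT' →
        ρ₀' =ᵐ[volume.restrict K₀] ρ₀ ∧ ρT' =ᵐ[volume.restrict KT] ρT :=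
  stmt0_general K₀ KT hK₀c hKTc μ₀ μT f₀ fT hf₀m hfTm hf₀0 hfT0 hμ₀ hμT hsupp₀ hsuppT p hpc hpp β hβ
end

section
/- Let (Ω, 𝓕, π) be a σ-finite measure space and let ν ≪ π be a measure with density f = dν/dπ such that C := ν(Ω) ∈ (0, ∞). Then the infimum of D_KL(μ, ν) over all probability measures μ on (Ω, 𝓕) with μ ≪ π equals −log C, and the infimum is attained by the probability measure μ* with dμ*/dπ = C⁻¹ f. -/
/-!
The minimiser `μ*` is the normalisation `ν̂ = C⁻¹ • ν` of `ν`.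
Rescaling the reference measure shifts the log-likelihood ratio by a constant,
`log (dμ/dν) = log (dμ/dν̂) - log C`, so `D_KL(μ, ν) = D_KL(μ, ν̂) - log C` for every probability
measure `μ`. By Gibbs' inequality `D_KL(μ, ν̂) ≥ 0`, with equality at `μ = ν̂`.
-/

open MeasureTheory
open scoped Classical

/-- Kullback–Leibler divergence: `D_KL(μ, ν) = ∫ log(dμ/dν) dμ` if `μ ≪ ν` (and the
log-likelihood ratio is integrable), and `∞` otherwise. Valued in `EReal = (-∞, ∞]` here. -/
noncomputable def klDiv {Ω : Type*} [MeasurableSpace Ω] (μ ν : Measure Ω) : EReal :=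
  if μ ≪ ν ∧ Integrable (llr μ ν) μ then ((∫ x, llr μ ν x ∂μ : ℝ) : EReal) else ⊤

namespace MeasureTheory

variable {Ω : Type*} [MeasurableSpace Ω] {μ ν : Measure Ω}

lemma integral_llr_nonneg [IsProbabilityMeasure μ] [IsProbabilityMeasure ν] (hμν : μ ≪ ν)
    (h_int : Integrable (llr μ ν) μ) : 0 ≤ ∫ x, llr μ ν x ∂μ := by
  simpa using InformationTheory.integral_llr_add_sub_measure_univ_nonneg hμν h_int

section Normalize

variable [IsFiniteMeasure ν]

lemma absolutelyContinuous_inv_measure_univ_smul : ν ≪ (ν Set.univ)⁻¹ • ν :=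
  Measure.absolutelyContinuous_smul (ENNReal.inv_ne_zero.2 (measure_ne_top _ _))

variable [NeZero ν]

lemma llr_ae_eq_llr_normalize_sub_log [IsFiniteMeasure μ] (hμν : μ ≪ ν) :
    llr μ ν =ᵐ[μ] fun x ↦ llr μ ((ν Set.univ)⁻¹ • ν) x - Real.log (ν Set.univ).toReal := by
  have hC0 : ν Set.univ ≠ 0 := NeZero.ne _
  have hCtop : ν Set.univ ≠ ⊤ := measure_ne_top _ _
  have hν : ν Set.univ • ((ν Set.univ)⁻¹ • ν) = ν := by
    rw [smul_smul, ENNReal.mul_inv_cancel hC0 hCtop, one_smul]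
  simpa only [hν] using
    llr_smul_right (hμν.trans absolutelyContinuous_inv_measure_univ_smul) _ hC0 hCtop

lemma neg_log_measure_univ_le_klDiv [IsProbabilityMeasure μ] :
    ((-Real.log (ν Set.univ).toReal : ℝ) : EReal) ≤ klDiv μ ν := by
  rw [klDiv]
  split_ifs with h
  · obtain ⟨hμν, h_int⟩ := h
    have h_shift := llr_ae_eq_llr_normalize_sub_log hμν
    have h_int' : Integrable (llr μ ((ν Set.univ)⁻¹ • ν)) μ :=
      (h_int.add (integrable_const (Real.log (ν Set.univ).toReal))).congr
        (h_shift.mono fun x hx ↦ by simp [hx])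
    have h_gibbs :=
      integral_llr_nonneg (hμν.trans absolutelyContinuous_inv_measure_univ_smul) h_int'
    rw [EReal.coe_le_coe_iff, integral_congr_ae h_shift,
      integral_sub h_int' (integrable_const _), integral_const]
    simpa using h_gibbs
  · exact le_top

lemma klDiv_normalize_self :
    klDiv ((ν Set.univ)⁻¹ • ν) ν = ((-Real.log (ν Set.univ).toReal : ℝ) : EReal) := by
  have hν' : (ν Set.univ)⁻¹ • ν ≪ ν := Measure.smul_absolutelyContinuous
  have h_const : llr ((ν Set.univ)⁻¹ • ν) ν =ᵐ[(ν Set.univ)⁻¹ • ν]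
      fun _ ↦ -Real.log (ν Set.univ).toReal := by
    filter_upwards [llr_ae_eq_llr_normalize_sub_log hν', llr_self ((ν Set.univ)⁻¹ • ν)]
      with x hx hx_self
    simp [hx, hx_self]
  have h_int : Integrable (llr ((ν Set.univ)⁻¹ • ν) ν) ((ν Set.univ)⁻¹ • ν) :=
    (integrable_const _).congr h_const.symm
  rw [klDiv, if_pos ⟨hν', h_int⟩, integral_congr_ae h_const, integral_const]
  simp

end Normalize

end MeasureTheory

theorem stmt1_general {Ω : Type*} [MeasurableSpace Ω] (π ν : Measure Ω)
    (f : Ω → ENNReal) (hν : ν = π.withDensity f)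
    (hC0 : ν Set.univ ≠ 0) (hCtop : ν Set.univ ≠ ⊤) :
    IsLeast {r : EReal | ∃ μ : Measure Ω, IsProbabilityMeasure μ ∧ μ ≪ π ∧ klDiv μ ν = r}
      ((-Real.log (ν Set.univ).toReal : ℝ) : EReal) ∧
    IsProbabilityMeasure (π.withDensity fun x => (ν Set.univ)⁻¹ * f x) ∧
    (π.withDensity fun x => (ν Set.univ)⁻¹ * f x) ≪ π ∧
    klDiv (π.withDensity fun x => (ν Set.univ)⁻¹ * f x) ν
      = ((-Real.log (ν Set.univ).toReal : ℝ) : EReal) := by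
  have : IsFiniteMeasure ν := ⟨hCtop.lt_top⟩
  have : NeZero ν := ⟨fun h ↦ hC0 (by simp [h])⟩
  have h_ac : (π.withDensity fun x => (ν Set.univ)⁻¹ * f x) ≪ π :=
    withDensity_absolutelyContinuous _ _
  have h_normalize : (π.withDensity fun x => (ν Set.univ)⁻¹ * f x) = (ν Set.univ)⁻¹ • ν := by
    calc π.withDensity ((ν Set.univ)⁻¹ • f)
        = (ν Set.univ)⁻¹ • π.withDensity f := withDensity_smul' _ _ (ENNReal.inv_ne_top.2 hC0)
      _ = (ν Set.univ)⁻¹ • ν := by rw [← hν]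
  rw [h_normalize] at h_ac ⊢
  refine ⟨⟨⟨_, inferInstance, h_ac, klDiv_normalize_self⟩, ?_⟩, inferInstance, h_ac,
    klDiv_normalize_self⟩
  rintro _ ⟨μ, hμ, -, rfl⟩
  exact neg_log_measure_univ_le_klDiv

/-- Lemma B1: on a σ-finite measure space `(Ω, 𝓕, π)`, for `ν ≪ π` with density `f` and
`C = ν(Ω) ∈ (0, ∞)`, the infimum of `D_KL(μ, ν)` over probability measures `μ ≪ π` is
`−log C`, attained at `μ*` with `dμ*/dπ = C⁻¹ f`. -/
theorem stmt1 {Ω : Type*} [MeasurableSpace Ω] (π ν : Measure Ω) [SigmaFinite π]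
    (f : Ω → ENNReal) (hf : Measurable f) (hν : ν = π.withDensity f)
    (hC0 : ν Set.univ ≠ 0) (hCtop : ν Set.univ ≠ ⊤) :
    IsLeast {r : EReal | ∃ μ : Measure Ω, IsProbabilityMeasure μ ∧ μ ≪ π ∧ klDiv μ ν = r}
      ((-Real.log (ν Set.univ).toReal : ℝ) : EReal) ∧
    IsProbabilityMeasure (π.withDensity fun x => (ν Set.univ)⁻¹ * f x) ∧
    (π.withDensity fun x => (ν Set.univ)⁻¹ * f x) ≪ π ∧
    klDiv (π.withDensity fun x => (ν Set.univ)⁻¹ * f x) ν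
      = ((-Real.log (ν Set.univ).toReal : ℝ) : EReal) :=
  stmt1_general π ν f hν hC0 hCtop
end

section
/- Let (Ω, 𝓕, π) be a σ-finite measure space and let ν₀, ν₁ be probability measures on (Ω, 𝓕) with densities f₀ = dν₀/dπ, f₁ = dν₁/dπ, such that ν₁ ≪ ν₀. Then C_β := ∫ f₀(x)^{1/(1+β)} f₁(x)^{β/(1+β)} π(dx) converges to ν₁(Ω) = 1 as β → ∞. -/
open MeasureTheory
open scoped Classical ENNReal

/-- The normalizing constant `C_β = ∫ f₀^{1/(1+β)} f₁^{β/(1+β)} dπ` of the geometric mixture. -/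
noncomputable def geomConst {Ω : Type*} [MeasurableSpace Ω] (π : Measure Ω)
    (f₀ f₁ : Ω → ℝ≥0∞) (β : ℝ) : ℝ≥0∞ :=
  ∫⁻ x, f₀ x ^ (1 / (1 + β)) * f₁ x ^ (β / (1 + β)) ∂π

/-- The geometric-mixture measure `μ*_β` with `dμ*_β/dπ = C_β⁻¹ f₀^{1/(1+β)} f₁^{β/(1+β)}`. -/
noncomputable def geomMix {Ω : Type*} [MeasurableSpace Ω] (π : Measure Ω)
    (f₀ f₁ : Ω → ℝ≥0∞) (β : ℝ) : Measure Ω :=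
  π.withDensity fun x => (geomConst π f₀ f₁ β)⁻¹ * (f₀ x ^ (1 / (1 + β)) * f₁ x ^ (β / (1 + β)))

/-!
Write `θ = 1/(1+β)`, so that `C_β = ∫ f₀^θ f₁^(1-θ) dπ` with `θ → 0`. Pointwise the integrand
tends to `f₁`: where `f₀ > 0` by continuity of `t ↦ a^t` for `0 < a < ∞`, and where `f₀ = 0`
because `ν₁ ≪ ν₀` forces `f₁ = 0` there. Since `a^θ b^(1-θ) ≤ max a b ≤ a + b`, the integrands
are dominated by `f₀ + f₁`, which has integral 2, and dominated convergence gives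
`C_β → ∫ f₁ dπ = 1`.
-/

open Filter Topology
open scoped NNReal

namespace ENNReal

lemma rpow_mul_rpow_one_sub_le_add (a b : ℝ≥0∞) {θ : ℝ} (h₀ : 0 ≤ θ) (h₁ : θ ≤ 1) :
    a ^ θ * b ^ (1 - θ) ≤ a + b :=
  calc a ^ θ * b ^ (1 - θ) ≤ max a b ^ θ * max a b ^ (1 - θ) :=
        mul_le_mul' (rpow_le_rpow (le_max_left a b) h₀)
          (rpow_le_rpow (le_max_right a b) (sub_nonneg.2 h₁))
    _ = max a b := by rw [← rpow_add_of_nonneg _ _ h₀ (sub_nonneg.2 h₁)]; simp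
    _ ≤ a + b := max_le le_self_add le_add_self

lemma tendsto_const_rpow {α : Type*} {l : Filter α} {a : ℝ≥0∞} (ha₀ : a ≠ 0) (ha : a ≠ ∞)
    {e : α → ℝ} {y : ℝ} (he : Tendsto e l (𝓝 y)) :
    Tendsto (fun t => a ^ e t) l (𝓝 (a ^ y)) := by
  lift a to ℝ≥0 using ha
  have ha₀' : a ≠ 0 := by exact_mod_cast ha₀
  simp only [← coe_rpow_of_ne_zero ha₀']
  exact tendsto_coe.2 (tendsto_const_nhds.nnrpow he (Or.inl ha₀'))

lemma tendsto_rpow_mul_rpow_one_sub {α : Type*} {l : Filter α} {a b : ℝ≥0∞} (ha : a ≠ ∞)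
    (hb : b ≠ ∞) (hab : a = 0 → b = 0) {θ : α → ℝ} (hθ : Tendsto θ l (𝓝 0)) :
    Tendsto (fun t => a ^ θ t * b ^ (1 - θ t)) l (𝓝 b) := by
  have hθ' : Tendsto (fun t => 1 - θ t) l (𝓝 1) := by
    simpa using tendsto_const_nhds.sub hθ
  rcases eq_or_ne b 0 with rfl | hb₀
  · refine tendsto_const_nhds.congr' ?_
    filter_upwards [hθ'.eventually (eventually_gt_nhds one_pos)] with t ht
    rw [zero_rpow_of_pos ht, mul_zero]
  · have ha₀ : a ≠ 0 := mt hab hb₀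
    simpa using ENNReal.Tendsto.mul (tendsto_const_rpow ha₀ ha hθ) (by simp)
      (tendsto_const_rpow hb₀ hb hθ') (by simp)

end ENNReal

namespace MeasureTheory

variable {α : Type*} [MeasurableSpace α] {μ : Measure α} {f g : α → ℝ≥0∞}

lemma ae_eq_zero_imp_of_withDensity_absolutelyContinuous (hf : AEMeasurable f μ)
    (hg : AEMeasurable g μ) (h : μ.withDensity g ≪ μ.withDensity f) :
    ∀ᵐ x ∂μ, f x = 0 → g x = 0 := by
  have hf_pos : ∀ᵐ x ∂μ.withDensity f, f x ≠ 0 :=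
    (ae_withDensity_iff' hf).2 (ae_of_all _ fun _ h => h)
  filter_upwards [(ae_withDensity_iff' hg).1 (h.ae_le hf_pos)] with x hx
  exact not_imp_not.1 hx

lemma tendsto_lintegral_rpow_mul_rpow_one_sub {ι : Type*} {l : Filter ι} [l.IsCountablyGenerated]
    (hf : AEMeasurable f μ) (hg : AEMeasurable g μ) (hf_fin : ∫⁻ x, f x ∂μ ≠ ∞)
    (hg_fin : ∫⁻ x, g x ∂μ ≠ ∞) (hfg : ∀ᵐ x ∂μ, f x = 0 → g x = 0) {θ : ι → ℝ}
    (hθ : Tendsto θ l (𝓝 0)) (hθ_nonneg : ∀ᶠ t in l, 0 ≤ θ t) :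
    Tendsto (fun t => ∫⁻ x, f x ^ θ t * g x ^ (1 - θ t) ∂μ) l (𝓝 (∫⁻ x, g x ∂μ)) := by
  refine tendsto_lintegral_filter_of_dominated_convergence' (fun x => f x + g x)
    (Eventually.of_forall fun t => by fun_prop) ?_ ?_ ?_
  · filter_upwards [hθ_nonneg, hθ.eventually (eventually_le_nhds zero_lt_one)] with t h₀ h₁
    exact ae_of_all _ fun x => ENNReal.rpow_mul_rpow_one_sub_le_add _ _ h₀ h₁
  · rw [lintegral_add_left' hf]
    exact ENNReal.add_ne_top.2 ⟨hf_fin, hg_fin⟩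
  · filter_upwards [ae_lt_top' hf hf_fin, ae_lt_top' hg hg_fin, hfg] with x hfx hgx hx
    exact ENNReal.tendsto_rpow_mul_rpow_one_sub hfx.ne hgx.ne hx hθ

end MeasureTheory

lemma tendsto_one_div_one_add_atTop_zero :
    Tendsto (fun β : ℝ => 1 / (1 + β)) atTop (𝓝 0) :=
  tendsto_const_nhds.div_atTop (tendsto_atTop_add_const_left _ 1 tendsto_id)

theorem stmt4_general {Ω : Type*} [MeasurableSpace Ω] (π ν₀ ν₁ : Measure Ω)
    [IsProbabilityMeasure ν₀] [IsProbabilityMeasure ν₁]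
    (f₀ f₁ : Ω → ℝ≥0∞) (hf₀ : Measurable f₀) (hf₁ : Measurable f₁)
    (hν₀ : ν₀ = π.withDensity f₀) (hν₁ : ν₁ = π.withDensity f₁)
    (h01 : ν₁ ≪ ν₀) :
    ν₁ Set.univ = 1 ∧
    Filter.Tendsto (fun β : ℝ => geomConst π f₀ f₁ β) Filter.atTop (nhds (ν₁ Set.univ)) := by
  have hmass : ∀ {ν : Measure Ω} {f : Ω → ℝ≥0∞},
      ν = π.withDensity f → ∫⁻ x, f x ∂π = ν Set.univ := fun h => by simp [h]
  have hfin : ∀ {ν : Measure Ω} [IsFiniteMeasure ν] {f : Ω → ℝ≥0∞},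
      ν = π.withDensity f → ∫⁻ x, f x ∂π ≠ ∞ := fun h => hmass h ▸ measure_ne_top _ _
  have hac : ∀ᵐ x ∂π, f₀ x = 0 → f₁ x = 0 :=
    ae_eq_zero_imp_of_withDensity_absolutelyContinuous hf₀.aemeasurable hf₁.aemeasurable
      (hν₀ ▸ hν₁ ▸ h01)
  have hlim := tendsto_lintegral_rpow_mul_rpow_one_sub hf₀.aemeasurable hf₁.aemeasurable
    (hfin hν₀) (hfin hν₁) hac tendsto_one_div_one_add_atTop_zero
    (eventually_ge_atTop 0 |>.mono fun β hβ => by positivity)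
  refine ⟨measure_univ, ?_⟩
  rw [← hmass hν₁]
  refine hlim.congr' ?_
  filter_upwards [eventually_gt_atTop 0] with β hβ
  rw [geomConst, one_sub_div (by positivity), add_sub_cancel_left]

theorem stmt4 {Ω : Type*} [MeasurableSpace Ω] (π ν₀ ν₁ : Measure Ω) [SigmaFinite π]
    [IsProbabilityMeasure ν₀] [IsProbabilityMeasure ν₁]
    (f₀ f₁ : Ω → ℝ≥0∞) (hf₀ : Measurable f₀) (hf₁ : Measurable f₁)
    (hν₀ : ν₀ = π.withDensity f₀) (hν₁ : ν₁ = π.withDensity f₁)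
    (h01 : ν₁ ≪ ν₀) :
    ν₁ Set.univ = 1 ∧
    Filter.Tendsto (fun β : ℝ => geomConst π f₀ f₁ β) Filter.atTop (nhds (ν₁ Set.univ)) :=
  stmt4_general π ν₀ ν₁ f₀ f₁ hf₀ hf₁ hν₀ hν₁ h01
end

section
/- Let (Ω, 𝓕, π) be a σ-finite measure space and let ν₀, ν₁ be probability measures on (Ω, 𝓕) with densities f₀ = dν₀/dπ, f₁ = dν₁/dπ, such that ν₁ ≪ ν₀. For β ≥ 0 set C_β := ∫ f₀^{1/(1+β)} f₁^{β/(1+β)} dπ and let μ*_β be the probability measure with dμ*_β/dπ = C_β⁻¹ f₀^{1/(1+β)} f₁^{β/(1+β)}. Then D_KL(μ*_β, ν₀) converges to D_KL(ν₁, ν₀) as β → ∞. -/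
/-
Write `r = f₁ / f₀`, a density of `ν₁` with respect to `ν₀`, and `t = β / (1 + β)`. Since
`1 / (1 + β) + t = 1`, the geometric mean `f₀ ^ (1 / (1 + β)) * f₁ ^ t` equals `f₀ * r ^ t`, so
`μ*_β` has `ν₀`-density `r ^ t / C_t` with `C_t = ∫ r ^ t dν₀`. Between probability measures
`D_KL(g ν, ν) = ∫ klFun g dν` with the nonnegative `klFun x = x log x + 1 - x`, so everything
reduces to `∫ klFun (r ^ t / C_t) dν₀ → ∫ klFun r dν₀` in `[0, ∞]` as `t ↑ 1`. Pointwise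
convergence holds because `C_t → 1`. Fatou's lemma settles the case `D_KL(ν₁, ν₀) = ∞`;
otherwise `r ^ t` lies between `1` and `r`, so `klFun (r ^ t) ≤ klFun r` by convexity, and
dominated convergence applies.
-/

open MeasureTheory
open scoped Classical ENNReal

open Filter Set
open InformationTheory hiding klDiv
open scoped Topology

theorem ENNReal.rpow_le_one_add {x : ℝ≥0∞} {t : ℝ} (ht₀ : 0 ≤ t) (ht₁ : t ≤ 1) :
    x ^ t ≤ 1 + x := by
  rcases le_or_gt x 1 with hx | hx
  · exact (ENNReal.rpow_le_one hx ht₀).trans le_self_add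
  · calc x ^ t ≤ x ^ (1 : ℝ) := ENNReal.rpow_le_rpow_of_exponent_le hx.le ht₁
      _ = x := ENNReal.rpow_one x
      _ ≤ 1 + x := le_add_self

theorem ENNReal.rpow_mul_mul_rpow_of_add_eq_one {x z : ℝ≥0∞} {a b : ℝ} (hx : x ≠ ⊤)
    (ha : 0 < a) (hb : 0 ≤ b) (hab : a + b = 1) :
    x ^ a * (x * z) ^ b = x * z ^ b := by
  rw [ENNReal.mul_rpow_of_nonneg _ _ hb, ← mul_assoc]
  congr 1
  by_cases hx₀ : x = 0
  · simp [hx₀, ENNReal.zero_rpow_of_pos ha]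
  · rw [← ENNReal.rpow_add _ _ hx₀ hx, hab, ENNReal.rpow_one]

theorem ENNReal.tendsto_rpow_of_tendsto_one {ι : Type*} {l : Filter ι} {s : ι → ℝ}
    {x : ℝ≥0∞} (hx : x ≠ ⊤) (hs : Tendsto s l (𝓝 1)) :
    Tendsto (fun i => x ^ s i) l (𝓝 x) := by
  have hlim : Tendsto (fun i => ENNReal.ofReal (x.toReal ^ s i)) l (𝓝 x) := by
    have := ENNReal.tendsto_ofReal
      ((Real.continuousAt_const_rpow' (a := x.toReal) one_ne_zero).tendsto.comp hs)
    rwa [Real.rpow_one, ENNReal.ofReal_toReal hx] at this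
  refine hlim.congr' ?_
  filter_upwards [hs.eventually (eventually_gt_nhds one_pos)] with i hi
  rw [← ENNReal.ofReal_rpow_of_nonneg ENNReal.toReal_nonneg hi.le, ENNReal.ofReal_toReal hx]

theorem Real.rpow_mem_uIcc_one {y t : ℝ} (hy : 0 ≤ y) (ht₀ : 0 ≤ t) (ht₁ : t ≤ 1) :
    y ^ t ∈ uIcc 1 y := by
  rcases le_total y 1 with h | h
  · rw [uIcc_of_ge h]
    exact ⟨Real.self_le_rpow_of_le_one hy h ht₁, Real.rpow_le_one hy h ht₀⟩
  · rw [uIcc_of_le h]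
    exact ⟨Real.one_le_rpow h ht₀, Real.rpow_le_self_of_one_le h ht₁⟩

theorem klFun_rpow_le {y t : ℝ} (hy : 0 ≤ y) (ht₀ : 0 ≤ t) (ht₁ : t ≤ 1) :
    klFun (y ^ t) ≤ klFun y := by
  have hmem : y ^ t ∈ segment ℝ 1 y := by
    rw [segment_eq_uIcc]
    exact Real.rpow_mem_uIcc_one hy ht₀ ht₁
  calc klFun (y ^ t) ≤ max (klFun 1) (klFun y) :=
        convexOn_klFun.le_on_segment (mem_Ici.2 zero_le_one) (mem_Ici.2 hy) hmem
    _ = klFun y := by rw [klFun_one, max_eq_right (klFun_nonneg hy)]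

theorem klFun_mul (c z : ℝ) :
    klFun (c * z) = c * klFun z + c * z * Real.log c + 1 - c := by
  rcases eq_or_ne c 0 with rfl | hc
  · simp [klFun_zero]
  rcases eq_or_ne z 0 with rfl | hz
  · simp [klFun_zero]
  rw [klFun_apply, klFun_apply, Real.log_mul hc hz]
  ring

theorem klFun_mul_le {c z : ℝ} (hc₀ : 0 ≤ c) (hc₂ : c ≤ 2) (hz : 0 ≤ z) :
    klFun (c * z) ≤ 2 * klFun z + 2 * z + 1 := by
  have hc_log : c * Real.log c ≤ 2 := by
    rcases hc₀.eq_or_lt with rfl | hc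
    · simp
    nlinarith [Real.log_le_sub_one_of_pos hc]
  have hkl := klFun_nonneg hz
  rw [klFun_mul]
  nlinarith

theorem klFun_mul_rpow_le {c y t : ℝ} (hc₀ : 0 ≤ c) (hc₂ : c ≤ 2) (hy : 0 ≤ y)
    (ht₀ : 0 ≤ t) (ht₁ : t ≤ 1) :
    klFun (c * y ^ t) ≤ 2 * klFun y + 2 * y + 3 := by
  have hyt : y ^ t ≤ 1 + y :=
    (Real.rpow_mem_uIcc_one hy ht₀ ht₁).2.trans (max_le (by linarith) (by linarith))
  have := klFun_mul_le hc₀ hc₂ (Real.rpow_nonneg hy t)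
  have := klFun_rpow_le hy ht₀ ht₁
  linarith

theorem klDiv_eq_coe_klDiv {Ω : Type*} [MeasurableSpace Ω] (μ ν : Measure Ω)
    [IsProbabilityMeasure μ] [IsProbabilityMeasure ν] :
    klDiv μ ν = (InformationTheory.klDiv μ ν : EReal) := by
  rw [klDiv]
  split_ifs with h
  · rw [InformationTheory.klDiv_of_ac_of_integrable h.1 h.2, EReal.coe_ennreal_ofReal,
      max_eq_left (InformationTheory.integral_llr_add_sub_measure_univ_nonneg h.1 h.2)]
    simp
  · rw [InformationTheory.klDiv_eq_top_iff.2 fun hac hint => h ⟨hac, hint⟩]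
    rfl

theorem klDiv_withDensity {Ω : Type*} [MeasurableSpace Ω] {ν : Measure Ω}
    [IsProbabilityMeasure ν] {g : Ω → ℝ≥0∞} (hg : Measurable g) (hg_one : ∫⁻ x, g x ∂ν = 1) :
    klDiv (ν.withDensity g) ν
      = ((∫⁻ x, ENNReal.ofReal (klFun (g x).toReal) ∂ν : ℝ≥0∞) : EReal) := by
  have : IsProbabilityMeasure (ν.withDensity g) :=
    ⟨by rw [withDensity_apply _ MeasurableSet.univ, setLIntegral_univ, hg_one]⟩
  rw [klDiv_eq_coe_klDiv, klDiv_eq_lintegral_klFun_of_ac (withDensity_absolutelyContinuous _ _),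
    lintegral_congr_ae ((Measure.rnDeriv_withDensity ν hg).mono fun x hx => by rw [hx])]

section normalizedRpow

variable {α ι : Type*} [MeasurableSpace α] {ν : Measure α} {r : α → ℝ≥0∞}
  {l : Filter ι} {s : ι → ℝ}

noncomputable def normalizedRpow (ν : Measure α) (r : α → ℝ≥0∞) (t : ℝ) : α → ℝ≥0∞ :=
  fun x => (∫⁻ y, r y ^ t ∂ν)⁻¹ * r x ^ t

theorem measurable_normalizedRpow (hr : Measurable r) (t : ℝ) :
    Measurable (normalizedRpow ν r t) :=
  (hr.pow_const t).const_mul _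

theorem lintegral_normalizedRpow {t : ℝ} (hr : Measurable r) (h₀ : ∫⁻ x, r x ^ t ∂ν ≠ 0)
    (h_top : ∫⁻ x, r x ^ t ∂ν ≠ ⊤) :
    ∫⁻ x, normalizedRpow ν r t x ∂ν = 1 := by
  simp only [normalizedRpow]
  rw [lintegral_const_mul _ (hr.pow_const t), ENNReal.inv_mul_cancel h₀ h_top]

theorem tendsto_lintegral_rpow [IsFiniteMeasure ν] [l.IsCountablyGenerated] (hr : Measurable r)
    (hr_top : ∫⁻ x, r x ∂ν ≠ ⊤) (hs : Tendsto s l (𝓝[≤] 1)) :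
    Tendsto (fun i => ∫⁻ x, r x ^ s i ∂ν) l (𝓝 (∫⁻ x, r x ∂ν)) := by
  have hs₁ : Tendsto s l (𝓝 1) := tendsto_nhds_of_tendsto_nhdsWithin hs
  refine tendsto_lintegral_filter_of_dominated_convergence (fun x => 1 + r x)
    (Eventually.of_forall fun i => hr.pow_const (s i)) ?_ ?_ ?_
  · filter_upwards [hs₁.eventually (eventually_gt_nhds zero_lt_one),
      eventually_mem_of_tendsto_nhdsWithin hs] with i hi₀ hi₁
    exact Eventually.of_forall fun x => ENNReal.rpow_le_one_add hi₀.le hi₁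
  · rw [lintegral_add_left measurable_const, lintegral_const]
    exact ENNReal.add_ne_top.2 ⟨by simp, hr_top⟩
  · filter_upwards [ae_lt_top hr hr_top] with x hx
    exact ENNReal.tendsto_rpow_of_tendsto_one hx.ne hs₁

theorem tendsto_normalizedRpow (hr_lim : Tendsto (fun i => ∫⁻ x, r x ^ s i ∂ν) l (𝓝 1))
    (hs : Tendsto s l (𝓝 1)) {x : α} (hx : r x ≠ ⊤) :
    Tendsto (fun i => normalizedRpow ν r (s i) x) l (𝓝 (r x)) := by
  have := ENNReal.Tendsto.mul (tendsto_inv_iff.2 hr_lim) (Or.inl (by simp))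
    (ENNReal.tendsto_rpow_of_tendsto_one hx hs) (Or.inr (by simp))
  simpa [normalizedRpow] using this

theorem klFun_toReal_normalizedRpow_le {t : ℝ} (hC : (∫⁻ x, r x ^ t ∂ν)⁻¹ < 2) (ht₀ : 0 ≤ t)
    (ht₁ : t ≤ 1) (x : α) :
    klFun (normalizedRpow ν r t x).toReal ≤ 2 * klFun (r x).toReal + 2 * (r x).toReal + 3 := by
  have hc : (∫⁻ x, r x ^ t ∂ν)⁻¹.toReal ≤ 2 := by
    simpa using ENNReal.toReal_mono (by simp) hC.le
  rw [normalizedRpow, ENNReal.toReal_mul, ← ENNReal.toReal_rpow]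
  exact klFun_mul_rpow_le ENNReal.toReal_nonneg hc ENNReal.toReal_nonneg ht₀ ht₁

theorem tendsto_lintegral_klFun_normalizedRpow [IsFiniteMeasure ν] [l.NeBot]
    [l.IsCountablyGenerated] (hr : Measurable r) (hr_one : ∫⁻ x, r x ∂ν = 1)
    (hs : Tendsto s l (𝓝[≤] 1)) :
    Tendsto (fun i => ∫⁻ x, ENNReal.ofReal (klFun (normalizedRpow ν r (s i) x).toReal) ∂ν) l
      (𝓝 (∫⁻ x, ENNReal.ofReal (klFun (r x).toReal) ∂ν)) := by
  have hs₁ : Tendsto s l (𝓝 1) := tendsto_nhds_of_tendsto_nhdsWithin hs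
  have hr_fin : ∫⁻ x, r x ∂ν ≠ ⊤ := hr_one ▸ ENNReal.one_ne_top
  have hC : Tendsto (fun i => ∫⁻ x, r x ^ s i ∂ν) l (𝓝 1) :=
    hr_one ▸ tendsto_lintegral_rpow hr hr_fin hs
  have hF_meas (i : ι) :
      Measurable fun x => ENNReal.ofReal (klFun (normalizedRpow ν r (s i) x).toReal) :=
    ENNReal.measurable_ofReal.comp
      (measurable_klFun.comp (measurable_normalizedRpow hr (s i)).ennreal_toReal)
  have hF_lim : ∀ᵐ x ∂ν, Tendsto
      (fun i => ENNReal.ofReal (klFun (normalizedRpow ν r (s i) x).toReal)) l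
      (𝓝 (ENNReal.ofReal (klFun (r x).toReal))) := by
    filter_upwards [ae_lt_top hr hr_fin] with x hx
    exact (ENNReal.continuous_ofReal.tendsto _).comp ((continuous_klFun.tendsto _).comp
      ((ENNReal.tendsto_toReal hx.ne).comp (tendsto_normalizedRpow hC hs₁ hx.ne)))
  by_cases hK : ∫⁻ x, ENNReal.ofReal (klFun (r x).toReal) ∂ν = ⊤
  · refine tendsto_of_le_liminf_of_limsup_le ?_ (by rw [hK]; exact le_top)
    rw [lintegral_congr_ae (hF_lim.mono fun x hx => hx.liminf_eq.symm)]
    exact lintegral_liminf_le hF_meas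
  · have hK_int : Integrable (fun x => klFun (r x).toReal) ν :=
      (lintegral_ofReal_ne_top_iff_integrable
        (measurable_klFun.comp hr.ennreal_toReal).aestronglyMeasurable
        (ae_of_all _ fun x => klFun_nonneg ENNReal.toReal_nonneg)).1 hK
    have hr_int : Integrable (fun x => (r x).toReal) ν :=
      integrable_toReal_of_lintegral_ne_top hr.aemeasurable hr_fin
    refine tendsto_lintegral_filter_of_dominated_convergence
      (fun x => ENNReal.ofReal (2 * klFun (r x).toReal + 2 * (r x).toReal + 3))
      (Eventually.of_forall hF_meas) ?_
      (((hK_int.const_mul 2).add (hr_int.const_mul 2)).add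
        (integrable_const 3)).lintegral_lt_top.ne hF_lim
    filter_upwards [hs₁.eventually (eventually_gt_nhds zero_lt_one),
      eventually_mem_of_tendsto_nhdsWithin hs,
      (tendsto_inv_iff.2 hC).eventually (eventually_lt_nhds (by norm_num : (1 : ℝ≥0∞)⁻¹ < 2))]
      with i hi₀ hi₁ hi₂
    exact Eventually.of_forall fun x =>
      ENNReal.ofReal_le_ofReal (klFun_toReal_normalizedRpow_le hi₂ hi₀.le hi₁ x)

end normalizedRpow

theorem tendsto_div_one_add_atTop_nhdsLE_one :
    Tendsto (fun x : ℝ => x / (1 + x)) atTop (𝓝[≤] 1) := by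
  have hlim : Tendsto (fun x : ℝ => 1 - (1 + x)⁻¹) atTop (𝓝 1) := by
    simpa using (tendsto_const_nhds (x := (1 : ℝ))).sub
      (tendsto_inv_atTop_zero.comp (tendsto_atTop_add_const_left atTop (1 : ℝ) tendsto_id))
  refine tendsto_nhdsWithin_iff.2 ⟨hlim.congr' ?_, ?_⟩ <;>
    filter_upwards [eventually_gt_atTop 0] with x hx
  · field_simp
    ring
  · rw [mem_Iic, div_le_one (by linarith)]
    linarith

section withDensity

variable {Ω : Type*} [MeasurableSpace Ω] {π : Measure Ω} {f₀ f₁ : Ω → ℝ≥0∞}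

theorem ae_eq_mul_div_of_withDensity_absolutelyContinuous (hf₀ : Measurable f₀)
    (hf₁ : Measurable f₁) (hf₀_top : ∀ᵐ x ∂π, f₀ x ≠ ⊤)
    (hac : π.withDensity f₁ ≪ π.withDensity f₀) :
    f₁ =ᵐ[π] f₀ * (f₁ / f₀) := by
  have h_supp : ∀ᵐ x ∂π, f₁ x ≠ 0 → f₀ x ≠ 0 :=
    (ae_withDensity_iff hf₁).1
      (hac.ae_le ((ae_withDensity_iff hf₀).2 (ae_of_all _ fun _ h => h)))
  filter_upwards [hf₀_top, h_supp] with x hx h_supp_x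
  exact (ENNReal.mul_div_cancel' (fun h => by_contra fun h₁ => h_supp_x h₁ h)
    fun h => absurd h hx).symm

theorem geomMix_eq_withDensity_normalizedRpow {r : Ω → ℝ≥0∞} {β : ℝ} (hf₀ : Measurable f₀)
    (hr : Measurable r) (hf₀_top : ∀ᵐ x ∂π, f₀ x ≠ ⊤) (hf₁ : f₁ =ᵐ[π] f₀ * r) (hβ : 0 ≤ β) :
    geomMix π f₀ f₁ β
      = (π.withDensity f₀).withDensity (normalizedRpow (π.withDensity f₀) r (β / (1 + β))) := by
  have hgeom : (fun x => f₀ x ^ (1 / (1 + β)) * f₁ x ^ (β / (1 + β)))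
      =ᵐ[π] fun x => f₀ x * r x ^ (β / (1 + β)) := by
    filter_upwards [hf₀_top, hf₁] with x hx hx₁
    rw [hx₁, Pi.mul_apply]
    exact ENNReal.rpow_mul_mul_rpow_of_add_eq_one hx (by positivity) (by positivity)
      (by field_simp)
  have hC : geomConst π f₀ f₁ β = ∫⁻ x, r x ^ (β / (1 + β)) ∂(π.withDensity f₀) := by
    rw [geomConst, lintegral_withDensity_eq_lintegral_mul _ hf₀ (hr.pow_const _)]
    exact lintegral_congr_ae hgeom
  rw [geomMix, ← withDensity_mul π hf₀ (measurable_normalizedRpow hr _)]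
  refine withDensity_congr_ae ?_
  filter_upwards [hgeom] with x hx
  rw [hx, Pi.mul_apply, normalizedRpow, hC, mul_left_comm]

end withDensity

theorem stmt5_general {Ω : Type*} [MeasurableSpace Ω] (π ν₀ ν₁ : Measure Ω)
    [IsProbabilityMeasure ν₀] [IsProbabilityMeasure ν₁]
    (f₀ f₁ : Ω → ℝ≥0∞) (hf₀ : Measurable f₀) (hf₁ : Measurable f₁)
    (hν₀ : ν₀ = π.withDensity f₀) (hν₁ : ν₁ = π.withDensity f₁)
    (h01 : ν₁ ≪ ν₀) :
    Filter.Tendsto (fun β : ℝ => klDiv (geomMix π f₀ f₁ β) ν₀) Filter.atTop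
      (nhds (klDiv ν₁ ν₀)) := by
  subst hν₀ hν₁
  have hf₀_top : ∀ᵐ x ∂π, f₀ x ≠ ⊤ := by
    refine (ae_lt_top hf₀ ?_).mono fun x hx => hx.ne
    rw [← setLIntegral_univ, ← withDensity_apply _ MeasurableSet.univ, measure_univ]
    exact ENNReal.one_ne_top
  have hr : Measurable (f₁ / f₀) := hf₁.div hf₀
  have hf₁_eq := ae_eq_mul_div_of_withDensity_absolutelyContinuous hf₀ hf₁ hf₀_top h01
  have hν₁ : π.withDensity f₁ = (π.withDensity f₀).withDensity (f₁ / f₀) := by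
    rw [← withDensity_mul π hf₀ hr]
    exact withDensity_congr_ae hf₁_eq
  have hr_one : ∫⁻ x, (f₁ / f₀) x ∂(π.withDensity f₀) = 1 := by
    rw [← setLIntegral_univ, ← withDensity_apply _ MeasurableSet.univ, ← hν₁, measure_univ]
  have hs := tendsto_div_one_add_atTop_nhdsLE_one
  have hC := hr_one ▸ tendsto_lintegral_rpow hr (hr_one ▸ ENNReal.one_ne_top) hs
  rw [hν₁, klDiv_withDensity hr hr_one]
  refine ((continuous_coe_ennreal_ereal.tendsto _).comp
    (tendsto_lintegral_klFun_normalizedRpow hr hr_one hs)).congr' ?_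
  filter_upwards [eventually_ge_atTop 0, hC.eventually_ne one_ne_zero,
    hC.eventually_ne ENNReal.one_ne_top] with β hβ hC₀ hC_top
  rw [Function.comp_apply, geomMix_eq_withDensity_normalizedRpow hf₀ hr hf₀_top hf₁_eq hβ,
    klDiv_withDensity (measurable_normalizedRpow hr _) (lintegral_normalizedRpow hr hC₀ hC_top)]

theorem stmt5 {Ω : Type*} [MeasurableSpace Ω] (π ν₀ ν₁ : Measure Ω) [SigmaFinite π]
    [IsProbabilityMeasure ν₀] [IsProbabilityMeasure ν₁]
    (f₀ f₁ : Ω → ℝ≥0∞) (hf₀ : Measurable f₀) (hf₁ : Measurable f₁)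
    (hν₀ : ν₀ = π.withDensity f₀) (hν₁ : ν₁ = π.withDensity f₁)
    (h01 : ν₁ ≪ ν₀) :
    Filter.Tendsto (fun β : ℝ => klDiv (geomMix π f₀ f₁ β) ν₀) Filter.atTop
      (nhds (klDiv ν₁ ν₀)) :=
  stmt5_general π ν₀ ν₁ f₀ f₁ hf₀ hf₁ hν₀ hν₁ h01
end

section
/- Let (Ω, 𝓕, π) be a σ-finite measure space, for i = 0, 1 let νᵢ be a finite measure with density fᵢ = dνᵢ/dπ, and let β ≥ 0. Let ν be the measure with density dν/dπ = f₀^{1/(1+β)} f₁^{β/(1+β)}. Then for every probability measure μ with μ ≪ ν₀ and μ ≪ ν₁ such that ∫ |log(dμ/dν₀)| dμ < ∞ and ∫ |log(dμ/dν₁)| dμ < ∞, one has μ ≪ ν and D_KL(μ, ν₀) + β·D_KL(μ, ν₁) = (1+β)·D_KL(μ, ν). -/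
open MeasureTheory
open scoped Classical ENNReal

theorem stmt6 {Ω : Type*} [MeasurableSpace Ω] (π ν₀ ν₁ : Measure Ω) [SigmaFinite π]
    [IsFiniteMeasure ν₀] [IsFiniteMeasure ν₁]
    (f₀ f₁ : Ω → ℝ≥0∞) (hf₀ : Measurable f₀) (hf₁ : Measurable f₁)
    (hν₀ : ν₀ = π.withDensity f₀) (hν₁ : ν₁ = π.withDensity f₁)
    (β : ℝ) (hβ : 0 ≤ β)
    (μ : Measure Ω) [IsProbabilityMeasure μ] (hμ₀ : μ ≪ ν₀) (hμ₁ : μ ≪ ν₁)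
    (hi₀ : Integrable (llr μ ν₀) μ) (hi₁ : Integrable (llr μ ν₁) μ) :
    μ ≪ π.withDensity (fun x => f₀ x ^ (1 / (1 + β)) * f₁ x ^ (β / (1 + β))) ∧
    klDiv μ ν₀ + (β : EReal) * klDiv μ ν₁
      = ((1 + β : ℝ) : EReal)
        * klDiv μ (π.withDensity fun x => f₀ x ^ (1 / (1 + β)) * f₁ x ^ (β / (1 + β))) := by
  have hβ1 : (0:ℝ) < 1 + β := by linarith
  set a : ℝ := 1 / (1 + β) with ha_def
  set b : ℝ := β / (1 + β) with hb_def
  have ha : 0 < a := by positivity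
  have hb : 0 ≤ b := by positivity
  have hab : a + b = 1 := by rw [ha_def, hb_def]; field_simp
  set g : Ω → ℝ≥0∞ := fun x => f₀ x ^ a * f₁ x ^ b with hg_def
  have hg : Measurable g := (hf₀.pow_const a).mul (hf₁.pow_const b)
  set ν : Measure Ω := π.withDensity g with hν_def
  have hμπ : μ ≪ π := hμ₀.trans (hν₀ ▸ withDensity_absolutelyContinuous π f₀)
  -- f₀, f₁ are a.e. μ nonzero
  have key₀ : ν₀ {x | f₀ x = 0} = 0 := by
    rw [hν₀]
    show (π.withDensity f₀) (f₀ ⁻¹' {0}) = 0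
    rw [ withDensity_apply _ (hf₀ (measurableSet_singleton 0)),
      setLIntegral_eq_zero_iff (hf₀ (measurableSet_singleton 0)) hf₀]
    exact Filter.Eventually.of_forall fun x hx => hx
  have key₁ : ν₁ {x | f₁ x = 0} = 0 := by
    rw [hν₁]
    show (π.withDensity f₁) (f₁ ⁻¹' {0}) = 0
    rw [ withDensity_apply _ (hf₁ (measurableSet_singleton 0)),
      setLIntegral_eq_zero_iff (hf₁ (measurableSet_singleton 0)) hf₁]
    exact Filter.Eventually.of_forall fun x hx => hx
  have h0₀ : ∀ᵐ x ∂μ, f₀ x ≠ 0 := by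
    have h := hμ₀ key₀
    rw [measure_eq_zero_iff_ae_notMem] at h
    filter_upwards [h] with x hx; simpa using hx
  have h0₁ : ∀ᵐ x ∂μ, f₁ x ≠ 0 := by
    have h := hμ₁ key₁
    rw [measure_eq_zero_iff_ae_notMem] at h
    filter_upwards [h] with x hx; simpa using hx
  -- μ ≪ ν
  have hacc : μ ≪ ν := by
    refine Measure.AbsolutelyContinuous.mk fun s hs h0 => ?_
    rw [hν_def, withDensity_apply _ hs, setLIntegral_eq_zero_iff hs hg] at h0
    have h' : ∀ᵐ x ∂μ, x ∈ s → g x = 0 := hμπ.ae_le h0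
    rw [measure_eq_zero_iff_ae_notMem]
    filter_upwards [h', h0₀, h0₁] with x hx hx0 hx1 hmem
    rcases mul_eq_zero.mp (hx hmem) with h | h
    · rcases ENNReal.rpow_eq_zero_iff.mp h with ⟨h, _⟩ | ⟨_, h⟩
      · exact hx0 h
      · linarith
    · rcases ENNReal.rpow_eq_zero_iff.mp h with ⟨h, hbpos⟩ | ⟨_, h⟩
      · exact hx1 h
      · linarith
  -- σ-finiteness of ν
  have hf₀fin : ∀ᵐ x ∂π, f₀ x ≠ ⊤ := by
    filter_upwards [ae_lt_top hf₀ (by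
      rw [← setLIntegral_univ, ← withDensity_apply _ MeasurableSet.univ, ← hν₀]
      exact (measure_lt_top ν₀ _).ne)] with x hx
    exact hx.ne
  have hf₁fin : ∀ᵐ x ∂π, f₁ x ≠ ⊤ := by
    filter_upwards [ae_lt_top hf₁ (by
      rw [← setLIntegral_univ, ← withDensity_apply _ MeasurableSet.univ, ← hν₁]
      exact (measure_lt_top ν₁ _).ne)] with x hx
    exact hx.ne
  have hgfin : ∀ᵐ x ∂π, g x ≠ ⊤ := by
    filter_upwards [hf₀fin, hf₁fin] with x hx0 hx1
    exact ENNReal.mul_ne_top (ENNReal.rpow_lt_top_of_nonneg ha.le hx0).ne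
      (ENNReal.rpow_lt_top_of_nonneg hb hx1).ne
  haveI : SigmaFinite ν := SigmaFinite.withDensity_of_ne_top hgfin
  -- chain rule identities (a.e. π)
  have hd₀ : ∀ᵐ x ∂π, μ.rnDeriv ν₀ x * f₀ x = μ.rnDeriv π x := by
    have h1 : ν₀.rnDeriv π =ᵐ[π] f₀ := hν₀ ▸ Measure.rnDeriv_withDensity π hf₀
    filter_upwards [Measure.rnDeriv_mul_rnDeriv hμ₀ (κ := π), h1] with x h2 h3
    rw [← h3]; exact h2
  have hd₁ : ∀ᵐ x ∂π, μ.rnDeriv ν₁ x * f₁ x = μ.rnDeriv π x := by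
    have h1 : ν₁.rnDeriv π =ᵐ[π] f₁ := hν₁ ▸ Measure.rnDeriv_withDensity π hf₁
    filter_upwards [Measure.rnDeriv_mul_rnDeriv hμ₁ (κ := π), h1] with x h2 h3
    rw [← h3]; exact h2
  have hd : ∀ᵐ x ∂π, μ.rnDeriv ν x * g x = μ.rnDeriv π x := by
    have h1 : ν.rnDeriv π =ᵐ[π] g := Measure.rnDeriv_withDensity π hg
    filter_upwards [Measure.rnDeriv_mul_rnDeriv hacc (κ := π), h1] with x h2 h3
    rw [← h3]; exact h2
  -- the key a.e.-μ identity for llr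
  have hllr : ∀ᵐ x ∂μ, llr μ ν x = a * llr μ ν₀ x + b * llr μ ν₁ x := by
    filter_upwards [hμπ.ae_le hd₀, hμπ.ae_le hd₁, hμπ.ae_le hd,
      Measure.rnDeriv_pos hμ₀, hμ₀.ae_le (Measure.rnDeriv_lt_top μ ν₀),
      Measure.rnDeriv_pos hμ₁, hμ₁.ae_le (Measure.rnDeriv_lt_top μ ν₁),
      Measure.rnDeriv_pos hacc, hacc.ae_le (Measure.rnDeriv_lt_top μ ν),
      Measure.rnDeriv_pos hμπ, hμπ.ae_le (Measure.rnDeriv_lt_top μ π),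
      h0₀, h0₁, hμπ.ae_le hf₀fin, hμπ.ae_le hf₁fin]
      with x e₀ e₁ e hr₀ hr₀t hr₁ hr₁t hr hrt hp hpt hs₀ hs₁ hs₀t hs₁t
    -- real versions
    set p := (μ.rnDeriv π x).toReal
    set r₀ := (μ.rnDeriv ν₀ x).toReal
    set r₁ := (μ.rnDeriv ν₁ x).toReal
    set r := (μ.rnDeriv ν x).toReal
    set s₀ := (f₀ x).toReal
    set s₁ := (f₁ x).toReal
    have hppos : 0 < p := ENNReal.toReal_pos hp.ne' hpt.ne
    have hr₀pos : 0 < r₀ := ENNReal.toReal_pos hr₀.ne' hr₀t.ne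
    have hr₁pos : 0 < r₁ := ENNReal.toReal_pos hr₁.ne' hr₁t.ne
    have hrpos : 0 < r := ENNReal.toReal_pos hr.ne' hrt.ne
    have hs₀pos : 0 < s₀ := ENNReal.toReal_pos hs₀ hs₀t
    have hs₁pos : 0 < s₁ := ENNReal.toReal_pos hs₁ hs₁t
    have E₀ : r₀ * s₀ = p := by rw [← ENNReal.toReal_mul, e₀]
    have E₁ : r₁ * s₁ = p := by rw [← ENNReal.toReal_mul, e₁]
    have hgx : (g x).toReal = s₀ ^ a * s₁ ^ b := by
      simp only [hg_def]
      rw [ENNReal.toReal_mul, ← ENNReal.toReal_rpow, ← ENNReal.toReal_rpow]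
    have E : r * (s₀ ^ a * s₁ ^ b) = p := by
      rw [← hgx, ← ENNReal.toReal_mul, e]
    -- take logs
    have L₀ : Real.log r₀ + Real.log s₀ = Real.log p := by
      rw [← Real.log_mul hr₀pos.ne' hs₀pos.ne', E₀]
    have L₁ : Real.log r₁ + Real.log s₁ = Real.log p := by
      rw [← Real.log_mul hr₁pos.ne' hs₁pos.ne', E₁]
    have L : Real.log r + (a * Real.log s₀ + b * Real.log s₁) = Real.log p := by
      rw [← Real.log_rpow hs₀pos, ← Real.log_rpow hs₁pos,
        ← Real.log_mul (Real.rpow_pos_of_pos hs₀pos a).ne' (Real.rpow_pos_of_pos hs₁pos b).ne',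
        ← Real.log_mul hrpos.ne' (by positivity), E]
    simp only [llr_def]
    linear_combination L - a * L₀ - b * L₁ - Real.log p * hab
  -- integrability and the integral computation
  have hllr' : llr μ ν =ᵐ[μ] (fun x => a * llr μ ν₀ x + b * llr μ ν₁ x) := hllr
  have hint : Integrable (llr μ ν) μ :=
    (((hi₀.const_mul a).add (hi₁.const_mul b)).congr hllr'.symm)
  have hI : ∫ x, llr μ ν x ∂μ = a * ∫ x, llr μ ν₀ x ∂μ + b * ∫ x, llr μ ν₁ x ∂μ := by
    rw [integral_congr_ae hllr', integral_add (hi₀.const_mul a) (hi₁.const_mul b),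
      integral_const_mul, integral_const_mul]
  refine ⟨hacc, ?_⟩
  rw [klDiv, klDiv, klDiv, if_pos ⟨hμ₀, hi₀⟩, if_pos ⟨hμ₁, hi₁⟩, if_pos ⟨hacc, hint⟩]
  rw [hI]
  rw [← EReal.coe_mul, ← EReal.coe_mul, ← EReal.coe_add, EReal.coe_eq_coe_iff,
    ha_def, hb_def]
  field_simp
end

section
/- Let β > 0, let p : ℝ^d × ℝ^d → (0, ∞), (x, y) ↦ p(x, y), be measurable with ∫_{ℝ^d} p(x, y) λ(dx) = 1 for every y ∈ ℝ^d, let μ₀ be a probability measure on ℝ^d, and let μ_T be a probability measure on ℝ^d with Lebesgue density f_T. Suppose there exist σ-finite measures ν₀ ≈ μ₀ and ν_T ≈ μ_T (mutually absolutely continuous), with ρ_T = dν_T/dλ, satisfying (dμ₀/dν₀)(y) = ∫ p(x, y) ν_T(dx) for ν₀-a.e. y, and f_T(x) = ρ_T(x)^{(1+β)/β} · k_T(x) for λ-a.e. x, where k_T(x) := ∫ p(x, y) ν₀(dy). Then f_T(x)^{β/(1+β)} k_T(x)^{1/(1+β)} = ρ_T(x) k_T(x) for λ-a.e. x, and ∫_{ℝ^d}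 f_T(x)^{β/(1+β)} k_T(x)^{1/(1+β)} λ(dx) = 1; that is, the geometric mixture f_T^{β/(1+β)} k_T^{1/(1+β)} is a probability density. -/
open MeasureTheory

/-- If `(ν₀, ν_T)` solves the soft-constrained Schrödinger system with parameter `β` for a
normalized positive transition density `p`, then `f_T^{β/(1+β)} k_T^{1/(1+β)} = ρ_T k_T`
λ-a.e. and the geometric mixture `f_T^{β/(1+β)} k_T^{1/(1+β)}` is a probability density. -/
theorem stmt9 {d : ℕ} (β : ℝ) (hβ : 0 < β)
    (p : (Fin d → ℝ) → (Fin d → ℝ) → ℝ)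
    (hpm : Measurable fun q : (Fin d → ℝ) × (Fin d → ℝ) => p q.1 q.2)
    (hppos : ∀ x y, 0 < p x y)
    (hpnorm : ∀ y, ∫ x, p x y ∂volume = 1)
    (μ₀ μT : Measure (Fin d → ℝ)) [IsProbabilityMeasure μ₀] [IsProbabilityMeasure μT]
    (fT : (Fin d → ℝ) → ℝ) (hfTm : Measurable fT) (hfT0 : ∀ x, 0 ≤ fT x)
    (hμT : μT = volume.withDensity fun x => ENNReal.ofReal (fT x))
    (ν₀ νT : Measure (Fin d → ℝ)) [SigmaFinite ν₀] [SigmaFinite νT]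
    (hν₀μ₀ : ν₀ ≪ μ₀) (hμ₀ν₀ : μ₀ ≪ ν₀) (hνTμT : νT ≪ μT) (hμTνT : μT ≪ νT)
    (ρT : (Fin d → ℝ) → ℝ) (hρTm : Measurable ρT) (hρT0 : ∀ x, 0 ≤ ρT x)
    (hνT : νT = volume.withDensity fun x => ENNReal.ofReal (ρT x))
    (hsys1 : ∀ᵐ y ∂ν₀, (μ₀.rnDeriv ν₀ y).toReal = ∫ x, p x y ∂νT)
    (hsys2 : ∀ᵐ x ∂volume, fT x = ρT x ^ ((1 + β) / β) * ∫ y, p x y ∂ν₀) :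
    (∀ᵐ x ∂volume,
      fT x ^ (β / (1 + β)) * (∫ y, p x y ∂ν₀) ^ (1 / (1 + β))
        = ρT x * ∫ y, p x y ∂ν₀) ∧
    ∫ x, fT x ^ (β / (1 + β)) * (∫ y, p x y ∂ν₀) ^ (1 / (1 + β)) ∂volume = 1 := by
  have hβ1 : (0:ℝ) < 1 + β := by linarith
  set kT : (Fin d → ℝ) → ℝ := fun x => ∫ y, p x y ∂ν₀ with hkT
  have hkT0 : ∀ x, 0 ≤ kT x := fun x => integral_nonneg fun y => (hppos x y).le
  -- Part 1
  have h1 : ∀ᵐ x ∂volume, fT x ^ (β / (1 + β)) * kT x ^ (1 / (1 + β)) = ρT x * kT x := by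
    filter_upwards [hsys2] with x hx
    rcases eq_or_lt_of_le (hkT0 x) with h0 | hpos
    · rw [hx, ← h0]
      rw [Real.zero_rpow (by positivity : (1:ℝ)/(1+β) ≠ 0)]
      ring
    · rw [hx, Real.mul_rpow (Real.rpow_nonneg (hρT0 x) _) (hkT0 x),
        ← Real.rpow_mul (hρT0 x), mul_assoc, ← Real.rpow_add hpos]
      have e1 : (1 + β) / β * (β / (1 + β)) = 1 := by field_simp
      have e2 : β / (1 + β) + 1 / (1 + β) = 1 := by field_simp; ring
      rw [e1, e2, Real.rpow_one, Real.rpow_one]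
  refine ⟨h1, ?_⟩
  -- measurability of kT
  have hkTm : Measurable kT := by
    have := hpm.stronglyMeasurable.integral_prod_right' (ν := ν₀)
    exact this.measurable
  -- lintegral kernel
  set K : (Fin d → ℝ) → ENNReal := fun x => ∫⁻ y, ENNReal.ofReal (p x y) ∂ν₀ with hK
  have hKm : Measurable K := Measurable.lintegral_prod_right (ENNReal.measurable_ofReal.comp hpm)
  -- a.e. x, ρT x > 0 → fT x > 0
  have hρf : ∀ᵐ x ∂volume, 0 < ρT x → 0 < fT x := by
    set A : Set (Fin d → ℝ) := {x | fT x = 0 ∧ 0 < ρT x} with hA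
    have hAm : MeasurableSet A :=
      (hfTm (measurableSet_singleton 0)).inter (measurableSet_lt measurable_const hρTm)
    have hμTA : μT A = 0 := by
      rw [hμT, withDensity_apply _ hAm,
        setLIntegral_eq_zero_iff hAm hfTm.ennreal_ofReal]
      filter_upwards [] with x hx
      simp [hx.1]
    have hνTA : νT A = 0 := hνTμT hμTA
    have hvolA : volume A = 0 := by
      rw [hνT, withDensity_apply _ hAm,
        setLIntegral_eq_zero_iff hAm hρTm.ennreal_ofReal, ae_iff] at hνTA
      refine measure_mono_null ?_ hνTA
      intro x hx
      simp only [Set.mem_setOf_eq]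
      push_neg
      refine ⟨hx, ?_⟩
      simp only [ne_eq, ENNReal.ofReal_eq_zero, not_le]
      exact hx.2
    rw [ae_iff]
    refine measure_mono_null ?_ hvolA
    intro x hx
    simp only [Set.mem_setOf_eq] at hx ⊢
    push_neg at hx
    exact ⟨le_antisymm hx.2 (hfT0 x), hx.1⟩
  -- a.e. pointwise identification of the lintegral kernel
  have hkey : ∀ᵐ x ∂volume, ENNReal.ofReal (ρT x) * K x = ENNReal.ofReal (ρT x * kT x) := by
    filter_upwards [hsys2, hρf] with x hx hρfx
    rcases eq_or_lt_of_le (hρT0 x) with h0 | hρpos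
    · simp [← h0]
    · have hfpos : 0 < fT x := hρfx hρpos
      have hkpos : 0 < kT x := by
        rcases eq_or_lt_of_le (hkT0 x) with h0' | h' 
        · exfalso
          rw [hx, show (∫ y, p x y ∂ν₀) = 0 from h0'.symm, mul_zero] at hfpos
          exact lt_irrefl _ hfpos
        · exact h'
      have hint : Integrable (fun y => p x y) ν₀ := by
        by_contra h
        exact hkpos.ne' (integral_undef h)
      have hKx : K x = ENNReal.ofReal (kT x) :=
        (ofReal_integral_eq_lintegral_ofReal hint (ae_of_all _ fun y => (hppos x y).le)).symm
      rw [hKx, ← ENNReal.ofReal_mul (hρT0 x)]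
  -- the total lintegral equals 1 via Tonelli and the first Schrödinger equation
  have hI : ∫⁻ x, ENNReal.ofReal (ρT x * kT x) ∂volume = 1 := by
    rw [← lintegral_congr_ae hkey]
    have hstep : ∫⁻ x, ENNReal.ofReal (ρT x) * K x ∂volume = ∫⁻ x, K x ∂νT := by
      rw [hνT, lintegral_withDensity_eq_lintegral_mul _ hρTm.ennreal_ofReal hKm]
      rfl
    rw [hstep]
    have hswap : ∫⁻ x, K x ∂νT = ∫⁻ y, ∫⁻ x, ENNReal.ofReal (p x y) ∂νT ∂ν₀ :=
      lintegral_lintegral_swap (ENNReal.measurable_ofReal.comp hpm).aemeasurable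
    rw [hswap]
    have hrn : ∀ᵐ y ∂ν₀, ∫⁻ x, ENNReal.ofReal (p x y) ∂νT = μ₀.rnDeriv ν₀ y := by
      filter_upwards [hsys1, hν₀μ₀.ae_le (Measure.rnDeriv_pos hμ₀ν₀),
        Measure.rnDeriv_lt_top μ₀ ν₀] with y h1 h2 h3
      have hpos : 0 < ∫ x, p x y ∂νT := by
        rw [← h1]; exact ENNReal.toReal_pos h2.ne' h3.ne
      have hint : Integrable (fun x => p x y) νT := by
        by_contra h; exact hpos.ne' (integral_undef h)
      rw [← ofReal_integral_eq_lintegral_ofReal hint (ae_of_all _ fun x => (hppos x y).le),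
        ← h1, ENNReal.ofReal_toReal h3.ne]
    rw [lintegral_congr_ae hrn, Measure.lintegral_rnDeriv hμ₀ν₀]
    simp
  have hfinal : ∫ x, ρT x * kT x ∂volume = 1 := by
    rw [integral_eq_lintegral_of_nonneg_ae (ae_of_all _ fun x => mul_nonneg (hρT0 x) (hkT0 x))
      (hρTm.mul hkTm).aestronglyMeasurable, hI]
    simp
  rw [integral_congr_ae h1, hfinal]
end

section
/- Let d ≥ 1, s > 0 and β > 0, and let φ_s(x) := (2πs²)^{−d/2} exp(−‖x‖²/(2s²)) be the centered Gaussian density on ℝ^d with covariance s²I. Let f_T : ℝ^d → [0, ∞) be a measurable probability density with c := ∫ f_T(x)^{β/(1+β)} dx ∈ (0, ∞), and define f₀(y) := c⁻¹ ∫ φ_s(x − y) f_T(x)^{β/(1+β)} dx. Then f₀ is a probability density on ℝ^d, and the functions ρ₀ ≡ c^{−(1+β)} and ρ_T(x) := c^{β} f_T(x)^{β/(1+β)} solve the soft-constrained Schrödinger system with kernel p(x, y) = φ_s(x − y): namely c^{1+β} f₀(y) = ∫ φ_s(x − y) ρ_T(x) dx for every y, and f_T(x) = ρ_T(x)^{(1+β)/β}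 ∫ φ_s(x − y) c^{−(1+β)} dy for a.e. x. -/
/-! Everything rests on `∫ φ_s(x − y) dy = 1` for every `x`, by translation invariance of Lebesgue
measure. With it the equation at time `T` reduces to the exponent identity
`(c^β f_T^{β/(1+β)})^{(1+β)/β} = c^{1+β} f_T`, and the total mass of `f₀`, an integral of a
convolution, is by Fubini `c⁻¹ (∫ φ_s) (∫ f_T^{β/(1+β)}) = 1`. -/

open MeasureTheory

/-- The centered Gaussian density on `ℝ^d` with covariance `s² I`. -/
noncomputable def gaussDensity (d : ℕ) (s : ℝ) (x : EuclideanSpace ℝ (Fin d)) : ℝ :=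
  (2 * Real.pi * s ^ 2) ^ (-(d : ℝ) / 2) * Real.exp (-‖x‖ ^ 2 / (2 * s ^ 2))

theorem gaussDensity_nonneg (d : ℕ) (s : ℝ) (x : EuclideanSpace ℝ (Fin d)) :
    0 ≤ gaussDensity d s x := by
  unfold gaussDensity; positivity

theorem integral_gaussDensity (d : ℕ) {s : ℝ} (hs : s ≠ 0) :
    ∫ x, gaussDensity d s x = 1 := by
  have hb : 0 < (2 * s ^ 2)⁻¹ := by positivity
  simp_rw [gaussDensity, neg_div, div_eq_inv_mul _ (2 * s ^ 2), ← neg_mul]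
  rw [integral_const_mul, GaussianFourier.integral_rexp_neg_mul_sq_norm hb,
    finrank_euclideanSpace_fin, div_inv_eq_mul, ← mul_assoc, mul_comm Real.pi 2,
    ← Real.rpow_add (by positivity), neg_add_cancel, Real.rpow_zero]

theorem integrable_gaussDensity (d : ℕ) {s : ℝ} (hs : s ≠ 0) :
    Integrable (gaussDensity d s) :=
  Integrable.of_integral_ne_zero (by rw [integral_gaussDensity d hs]; exact one_ne_zero)

theorem integral_gaussDensity_sub (d : ℕ) {s : ℝ} (hs : s ≠ 0) (x : EuclideanSpace ℝ (Fin d)) :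
    ∫ y, gaussDensity d s (x - y) = 1 := by
  rw [integral_sub_left_eq_self, integral_gaussDensity d hs]

theorem integral_integral_sub_mul {G : Type*} [AddCommGroup G] [MeasurableSpace G]
    [MeasurableAdd₂ G] [MeasurableNeg G] {μ : Measure G} [SFinite μ] [μ.IsAddLeftInvariant]
    [μ.IsNegInvariant] {φ g : G → ℝ} (hφ : Integrable φ μ) (hg : Integrable g μ) :
    ∫ y, ∫ x, φ (x - y) * g x ∂μ ∂μ = (∫ x, φ x ∂μ) * ∫ x, g x ∂μ := by
  have h := integral_convolution (ContinuousLinearMap.mul ℝ ℝ) hφ.comp_neg hg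
  simp only [convolution_mul_swap, neg_sub, ContinuousLinearMap.mul_apply'] at h
  rw [h, integral_neg_eq_self]

theorem Real.mul_rpow_rpow_inv {a b c f : ℝ} (hc : 0 ≤ c) (hf : 0 ≤ f) (ha : a ≠ 0) :
    (c ^ b * f ^ a) ^ a⁻¹ = c ^ (b / a) * f := by
  rw [Real.mul_rpow (by positivity) (by positivity), Real.rpow_rpow_inv hf ha,
    ← Real.rpow_mul hc, div_eq_mul_inv]

theorem stmt12_general {d : ℕ} (s β : ℝ) (hs : 0 < s) (hβ : 0 < β)
    (fT : EuclideanSpace ℝ (Fin d) → ℝ) (hfT0 : ∀ x, 0 ≤ fT x)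
    (c : ℝ) (hc : c = ∫ x, fT x ^ (β / (1 + β)) ∂volume) (hcpos : 0 < c)
    (hcint : Integrable (fun x => fT x ^ (β / (1 + β))) volume) :
    (∀ y, 0 ≤ c⁻¹ * ∫ x, gaussDensity d s (x - y) * fT x ^ (β / (1 + β)) ∂volume) ∧
    (∫ y, c⁻¹ * ∫ x, gaussDensity d s (x - y) * fT x ^ (β / (1 + β)) ∂volume ∂volume = 1) ∧
    (∀ y, c ^ (1 + β) * (c⁻¹ * ∫ x, gaussDensity d s (x - y) * fT x ^ (β / (1 + β)) ∂volume)
        = ∫ x, gaussDensity d s (x - y) * (c ^ β * fT x ^ (β / (1 + β))) ∂volume) ∧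
    (∀ᵐ x ∂volume,
      fT x = (c ^ β * fT x ^ (β / (1 + β))) ^ ((1 + β) / β)
        * ∫ y, gaussDensity d s (x - y) * c ^ (-(1 + β)) ∂volume) := by
  refine ⟨fun y => ?_, ?_, fun y => ?_, ae_of_all _ fun x => ?_⟩
  · exact mul_nonneg (inv_nonneg.mpr hcpos.le) (integral_nonneg fun x =>
      mul_nonneg (gaussDensity_nonneg d s _) (Real.rpow_nonneg (hfT0 x) _))
  · rw [integral_const_mul, integral_integral_sub_mul (integrable_gaussDensity d hs.ne') hcint,
      integral_gaussDensity d hs.ne', one_mul, ← hc, inv_mul_cancel₀ hcpos.ne']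
  · simp_rw [mul_left_comm _ (c ^ β)]
    rw [integral_const_mul, ← mul_assoc, add_comm, Real.rpow_add_one hcpos.ne',
      mul_inv_cancel_right₀ hcpos.ne']
  · rw [integral_mul_const, integral_gaussDensity_sub d hs.ne', one_mul, ← inv_div β (1 + β),
      Real.mul_rpow_rpow_inv hcpos.le (hfT0 x) (by positivity),
      div_div_cancel₀ hβ.ne', Real.rpow_neg hcpos.le, mul_right_comm,
      mul_inv_cancel₀ (by positivity), one_mul]

/-- Explicit solution of the soft-constrained Schrödinger system with Gaussian kernel:
`f₀ = c⁻¹ (φ_s ⋆ f_T^{β/(1+β)})` is a probability density, and `ρ₀ ≡ c^{−(1+β)}`,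
`ρ_T = c^β f_T^{β/(1+β)}` solve the system. -/
theorem stmt12 {d : ℕ} (hd : 1 ≤ d) (s β : ℝ) (hs : 0 < s) (hβ : 0 < β)
    (fT : EuclideanSpace ℝ (Fin d) → ℝ) (hfTm : Measurable fT) (hfT0 : ∀ x, 0 ≤ fT x)
    (hfT1 : ∫ x, fT x ∂volume = 1)
    (c : ℝ) (hc : c = ∫ x, fT x ^ (β / (1 + β)) ∂volume) (hcpos : 0 < c)
    (hcint : Integrable (fun x => fT x ^ (β / (1 + β))) volume) :
    (∀ y, 0 ≤ c⁻¹ * ∫ x, gaussDensity d s (x - y) * fT x ^ (β / (1 + β)) ∂volume) ∧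
    (∫ y, c⁻¹ * ∫ x, gaussDensity d s (x - y) * fT x ^ (β / (1 + β)) ∂volume ∂volume = 1) ∧
    (∀ y, c ^ (1 + β) * (c⁻¹ * ∫ x, gaussDensity d s (x - y) * fT x ^ (β / (1 + β)) ∂volume)
        = ∫ x, gaussDensity d s (x - y) * (c ^ β * fT x ^ (β / (1 + β))) ∂volume) ∧
    (∀ᵐ x ∂volume,
      fT x = (c ^ β * fT x ^ (β / (1 + β))) ^ ((1 + β) / β)
        * ∫ y, gaussDensity d s (x - y) * c ^ (-(1 + β)) ∂volume) :=
  stmt12_general s β hs hβ fT hfT0 c hc hcpos hcint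
end
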